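/- arXiv:2602.19804 — 5 statements merged into one kernel-verified Lean document; each statement's English description precedes it below -/
import Mathlib

section
/- Let n, l, k be positive integers with l ≤ k ≤ n. Let S ⊆ 𝔼^{n+1} be a closed set with μH^{n-k}(S) = 0. Let D = closedBall(0,1) ⊆ 𝔼^{l+1} and let f : D → 𝔼^{n+1} be a continuous map such that f(sphere(0,1)) ∩ S = ∅. Then for every ε > 0 there exists a continuous map f̃ : D → 𝔼^{n+1} such that (1) f̃(x) = f(x) for every x in the unit sphere sphere(0,1) ⊆ 𝔼^{l+1}, (2) ‖f(x) − f̃(x)‖ < ε for every x ∈ D, and (3) f̃(D) ∩ S = ∅. -/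
open Metric MeasureTheory Set
open scoped ENNReal NNReal Convolution

lemma aux_zero {a C : ℝ≥0∞} (hC : C ≠ ⊤)
    (h : ∀ b : ℝ≥0∞, 0 < b → b ≤ 1 → a ≤ C * b) : a = 0 := by
  refine le_antisymm ?_ zero_le
  refine ENNReal.le_of_forall_pos_le_add fun ε hε _ => ?_
  rw [zero_add]
  have hC1 : (C + 1) ≠ 0 := by simp
  have hC1' : (C + 1) ≠ ⊤ := by simp [hC]
  have hb : (0:ℝ≥0∞) < min 1 ((ε : ℝ≥0∞) / (C + 1)) := by
    refine lt_min one_pos (ENNReal.div_pos ?_ hC1')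
    exact_mod_cast hε.ne'
  calc a ≤ C * min 1 ((ε : ℝ≥0∞) / (C + 1)) := h _ hb (min_le_left _ _)
    _ ≤ (C + 1) * ((ε : ℝ≥0∞) / (C + 1)) := by
        exact mul_le_mul' le_self_add (min_le_right _ _)
    _ = (ε : ℝ≥0∞) := ENNReal.mul_div_cancel hC1 hC1'

lemma euclid_coord_le_norm {m : ℕ} (x : EuclideanSpace ℝ (Fin m)) (i : Fin m) :
    |x i| ≤ ‖x‖ := by
  rw [EuclideanSpace.norm_eq, ← Real.sqrt_sq_eq_abs]
  refine Real.sqrt_le_sqrt ?_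
  have := Finset.single_le_sum (f := fun j => ‖x j‖ ^ 2)
    (fun j _ => sq_nonneg _) (Finset.mem_univ i)
  simpa [Real.norm_eq_abs, sq_abs] using this

lemma gridCover (m : ℕ) {ρ : ℝ} (hρ : 0 < ρ) :
    ∃ T : Finset (EuclideanSpace ℝ (Fin m)),
      T.card ≤ (2 * ⌈1/ρ⌉₊ + 3) ^ m ∧
      closedBall (0 : EuclideanSpace ℝ (Fin m)) 1 ⊆
        ⋃ q ∈ T, closedBall q (ρ * Real.sqrt m) := by
  classical
  set N : ℕ := ⌈1/ρ⌉₊ with hN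
  set G : Finset (Fin m → ℤ) := Fintype.piFinset fun _ => Finset.Icc (-(N+1) : ℤ) (N+1) with hG
  refine ⟨G.image (fun c => (WithLp.toLp 2 (fun i => ρ * c i) : EuclideanSpace ℝ (Fin m))), ?_, ?_⟩
  · calc (G.image _).card ≤ G.card := Finset.card_image_le
      _ = (2 * N + 3) ^ m := by
          rw [hG, Fintype.card_piFinset]
          simp only [Int.card_Icc]
          rw [Finset.prod_const, Finset.card_univ, Fintype.card_fin]
          congr 1
          omega
  · intro x hx
    simp only [mem_closedBall, dist_zero_right] at hx
    set c : Fin m → ℤ := fun i => round (x i / ρ) with hc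
    have hxi : ∀ i, |x i| ≤ 1 := fun i => (euclid_coord_le_norm x i).trans hx
    have hcG : c ∈ G := by
      rw [hG, Fintype.mem_piFinset]
      intro i
      rw [Finset.mem_Icc]
      have h1 : |(c i : ℝ)| ≤ |x i / ρ| + 1/2 := by
        have h3 : |(round (x i / ρ) : ℝ)| - |x i / ρ| ≤ |(round (x i / ρ) : ℝ) - x i / ρ| :=
          abs_sub_abs_le_abs_sub _ _
        have h2 : |(round (x i / ρ) : ℝ) - x i / ρ| = |x i / ρ - round (x i / ρ)| := abs_sub_comm _ _
        have h4 := abs_sub_round (x i / ρ)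
        rw [hc]
        simp only []
        linarith [h3, h2 ▸ h3]
      have h2 : |x i / ρ| ≤ 1 / ρ := by
        rw [abs_div, abs_of_pos hρ]
        gcongr
        exact hxi i
      have h5 : (1:ℝ)/ρ ≤ N := Nat.le_ceil _
      have h6 : |(c i : ℝ)| ≤ (N : ℝ) + 1 := by linarith
      have h7 : |c i| ≤ (N : ℤ) + 1 := by exact_mod_cast (by push_cast; exact h6 : |(c i : ℝ)| ≤ ((N : ℤ) : ℝ) + 1)
      have := abs_le.mp h7; omega
    refine mem_iUnion₂.2 ⟨_, Finset.mem_image_of_mem _ hcG, ?_⟩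
    rw [mem_closedBall]
    have hd : dist x (WithLp.toLp 2 (fun i => ρ * c i) : EuclideanSpace ℝ (Fin m)) =
        Real.sqrt (∑ i, dist (x i) (ρ * c i) ^ 2) := EuclideanSpace.dist_eq _ _
    rw [hd]
    have hb : ∀ i, dist (x i) (ρ * c i) ^ 2 ≤ ρ ^ 2 := by
      intro i
      have h1 : |x i - ρ * c i| ≤ ρ := by
        have h2 : x i - ρ * c i = ρ * (x i / ρ - c i) := by field_simp
        rw [h2, abs_mul, abs_of_pos hρ]
        have := abs_sub_round (x i / ρ)
        nlinarith
      rw [Real.dist_eq]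
      nlinarith [abs_nonneg (x i - ρ * c i)]
    calc Real.sqrt (∑ i, dist (x i) (ρ * c i) ^ 2)
        ≤ Real.sqrt (∑ _i : Fin m, ρ ^ 2) := Real.sqrt_le_sqrt (Finset.sum_le_sum fun i _ => hb i)
      _ = Real.sqrt ((m : ℝ) * ρ ^ 2) := by rw [Finset.sum_const, Finset.card_univ,
          Fintype.card_fin, nsmul_eq_mul]
      _ = ρ * Real.sqrt m := by
          rw [Real.sqrt_mul (Nat.cast_nonneg m), Real.sqrt_sq hρ.le, mul_comm]

lemma scaleBound {m p : ℕ} {L : ℝ≥0} {g : EuclideanSpace ℝ (Fin m) → EuclideanSpace ℝ (Fin p)}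
    (hg : LipschitzOnWith L g (closedBall 0 1))
    (U : Set (EuclideanSpace ℝ (Fin p))) {ρ r : ℝ} (hρ : 0 < ρ) (hr : 0 ≤ r)
    (hdiam : EMetric.diam U ≤ ENNReal.ofReal r) :
    volume {y | ∃ s ∈ U, ∃ x ∈ closedBall (0 : EuclideanSpace ℝ (Fin m)) 1, y = s - g x}
      ≤ (((2 * ⌈1/ρ⌉₊ + 3) ^ m : ℕ) : ℝ≥0∞) *
        (ENNReal.ofReal ((r + (L : ℝ) * (2 * (ρ * Real.sqrt m))) ^ p) *
          volume (ball (0 : EuclideanSpace ℝ (Fin p)) 1)) := by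
  classical
  obtain ⟨T, hcard, hcov⟩ := gridCover m hρ
  set A := closedBall (0 : EuclideanSpace ℝ (Fin m)) 1 with hA
  set R : ℝ := r + (L : ℝ) * (2 * (ρ * Real.sqrt m)) with hR
  have hRnn : 0 ≤ R := by
    have : (0:ℝ) ≤ (L : ℝ) * (2 * (ρ * Real.sqrt m)) := by positivity
    linarith
  set W : EuclideanSpace ℝ (Fin m) → Set (EuclideanSpace ℝ (Fin p)) :=
    fun q => {y | ∃ s ∈ U, ∃ x ∈ A ∩ closedBall q (ρ * Real.sqrt m), y = s - g x} with hW
  have hsub : {y | ∃ s ∈ U, ∃ x ∈ A, y = s - g x} ⊆ ⋃ q ∈ T, W q := by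
    rintro y ⟨s, hs, x, hx, rfl⟩
    obtain ⟨q, hqT, hxq⟩ := mem_iUnion₂.1 (hcov hx)
    exact mem_iUnion₂.2 ⟨q, hqT, ⟨s, hs, x, ⟨hx, hxq⟩, rfl⟩⟩
  have hWq : ∀ q, volume (W q) ≤
      ENNReal.ofReal (R ^ p) * volume (ball (0 : EuclideanSpace ℝ (Fin p)) 1) := by
    intro q
    rcases eq_empty_or_nonempty (W q) with hWe | ⟨y₀, s₀, hs₀, x₀, hx₀, hy₀⟩
    · simp [hWe]
    · have hWsub : W q ⊆ closedBall y₀ R := by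
        rintro y ⟨s, hs, x, hx, rfl⟩
        rw [mem_closedBall, hy₀]
        have h1 : dist s s₀ ≤ r := by
          rw [← edist_le_ofReal hr]
          exact (EMetric.edist_le_diam_of_mem hs hs₀).trans hdiam
        have h2 : dist (g x) (g x₀) ≤ (L : ℝ) * (2 * (ρ * Real.sqrt m)) := by
          refine (hg.dist_le_mul x hx.1 x₀ hx₀.1).trans ?_
          have : dist x x₀ ≤ 2 * (ρ * Real.sqrt m) := by
            calc dist x x₀ ≤ dist x q + dist q x₀ := dist_triangle _ _ _
              _ ≤ ρ * Real.sqrt m + ρ * Real.sqrt m := by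
                  refine add_le_add hx.2 ?_
                  rw [dist_comm]; exact hx₀.2
              _ = 2 * (ρ * Real.sqrt m) := by ring
          exact mul_le_mul_of_nonneg_left this (NNReal.coe_nonneg L)
        calc dist (s - g x) (s₀ - g x₀)
            = ‖(s - s₀) - (g x - g x₀)‖ := by rw [dist_eq_norm]; congr 1; abel
          _ ≤ ‖s - s₀‖ + ‖g x - g x₀‖ := norm_sub_le _ _
          _ = dist s s₀ + dist (g x) (g x₀) := by rw [dist_eq_norm, dist_eq_norm]
          _ ≤ R := by rw [hR]; exact add_le_add h1 h2
      calc volume (W q) ≤ volume (closedBall y₀ R) := measure_mono hWsub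
        _ = ENNReal.ofReal (R ^ p) * volume (ball (0 : EuclideanSpace ℝ (Fin p)) 1) := by
            rw [Measure.addHaar_closedBall _ _ hRnn, finrank_euclideanSpace_fin]
  calc volume {y | ∃ s ∈ U, ∃ x ∈ A, y = s - g x}
      ≤ volume (⋃ q ∈ T, W q) := measure_mono hsub
    _ ≤ ∑ q ∈ T, volume (W q) := measure_biUnion_finset_le _ _
    _ ≤ ∑ _q ∈ T, ENNReal.ofReal (R ^ p) * volume (ball (0 : EuclideanSpace ℝ (Fin p)) 1) :=
        Finset.sum_le_sum fun q _ => hWq q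
    _ = (T.card : ℝ≥0∞) * (ENNReal.ofReal (R ^ p) * volume (ball (0 : EuclideanSpace ℝ (Fin p)) 1)) := by
        rw [Finset.sum_const, nsmul_eq_mul]
    _ ≤ _ := by
        refine mul_le_mul_left ?_ _
        exact_mod_cast Nat.cast_le.2 hcard

lemma rpow_add_le_aux {a b : ℝ≥0∞} {d : ℝ} (hd : 0 ≤ d) :
    (a + b) ^ d ≤ 2 ^ d * (a ^ d + b ^ d) := by
  rcases le_total a b with h | h
  · calc (a + b) ^ d ≤ (2 * b) ^ d := by
          refine ENNReal.rpow_le_rpow ?_ hd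
          rw [two_mul]; exact add_le_add_left h _
      _ = 2 ^ d * b ^ d := ENNReal.mul_rpow_of_nonneg _ _ hd
      _ ≤ 2 ^ d * (a ^ d + b ^ d) := mul_le_mul_right le_add_self _
  · calc (a + b) ^ d ≤ (2 * a) ^ d := by
          refine ENNReal.rpow_le_rpow ?_ hd
          rw [two_mul]; exact add_le_add_right h _
      _ = 2 ^ d * a ^ d := ENNReal.mul_rpow_of_nonneg _ _ hd
      _ ≤ 2 ^ d * (a ^ d + b ^ d) := mul_le_mul_right le_self_add _

lemma coreNull {m p : ℕ} (hmp : m < p) {d : ℝ} (hd : 1 ≤ d) (hdmp : d + m ≤ p)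
    {S : Set (EuclideanSpace ℝ (Fin p))} (hS : μH[d] S = 0)
    {L : ℝ≥0} {g : EuclideanSpace ℝ (Fin m) → EuclideanSpace ℝ (Fin p)}
    (hg : LipschitzOnWith L g (closedBall 0 1)) :
    volume {y | ∃ s ∈ S, ∃ x ∈ closedBall (0 : EuclideanSpace ℝ (Fin m)) 1, y = s - g x} = 0 := by
  classical
  set a : ℝ := (L : ℝ) * Real.sqrt m with ha
  have hann : 0 ≤ a := by positivity
  set c₁ : ℝ := 14 ^ m * (1 + a) ^ p with hc₁
  have hc₁nn : 0 ≤ c₁ := by positivity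
  set vol1 : ℝ≥0∞ := volume (ball (0 : EuclideanSpace ℝ (Fin p)) 1) with hvol1
  have hvol1top : vol1 ≠ ⊤ := measure_ball_lt_top.ne
  set K : ℝ≥0∞ := ENNReal.ofReal (c₁ * 2 ^ p) * vol1 with hK
  have hKtop : K ≠ ⊤ := ENNReal.mul_ne_top ENNReal.ofReal_ne_top hvol1top
  set K2 : ℝ≥0∞ := K * 2 ^ d with hK2
  have h2dtop : (2 : ℝ≥0∞) ^ d ≠ ⊤ := by
    exact ENNReal.rpow_ne_top_of_nonneg (by linarith) (by norm_num)
  have hK2top : K2 ≠ ⊤ := ENNReal.mul_ne_top hKtop h2dtop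
  -- the Hausdorff measure characterization at scale 1
  rw [MeasureTheory.Measure.hausdorffMeasure_apply] at hS
  have hinf : (⨅ (t : ℕ → Set (EuclideanSpace ℝ (Fin p))) (_ : S ⊆ ⋃ n, t n)
      (_ : ∀ n, EMetric.diam (t n) ≤ 1), ∑' n, ⨆ _ : (t n).Nonempty, EMetric.diam (t n) ^ d)
      = 0 := by
    refine le_antisymm ?_ zero_le
    rw [← hS]
    exact le_iSup₂ (f := fun (r : ℝ≥0∞) (_ : 0 < r) =>
      (⨅ (t : ℕ → Set (EuclideanSpace ℝ (Fin p))) (_ : S ⊆ ⋃ n, t n)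
      (_ : ∀ n, EMetric.diam (t n) ≤ r), ∑' n, ⨆ _ : (t n).Nonempty, EMetric.diam (t n) ^ d))
      1 one_pos
  -- main estimate
  refine aux_zero (C := 3 * K2) (ENNReal.mul_ne_top (by norm_num) hK2top) ?_
  intro b hb hb1
  have hbtop : b ≠ ⊤ := (hb1.trans_lt (by norm_num)).ne
  -- get a cover with total mass < b
  have hlt : (⨅ (t : ℕ → Set (EuclideanSpace ℝ (Fin p))) (_ : S ⊆ ⋃ n, t n)
      (_ : ∀ n, EMetric.diam (t n) ≤ 1), ∑' n, ⨆ _ : (t n).Nonempty, EMetric.diam (t n) ^ d)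
      < b := by rw [hinf]; exact hb
  rw [iInf_lt_iff] at hlt
  obtain ⟨t, hlt⟩ := hlt
  rw [iInf_lt_iff] at hlt
  obtain ⟨hcov, hlt⟩ := hlt
  rw [iInf_lt_iff] at hlt
  obtain ⟨hdiam1, hsum⟩ := hlt
  -- set up radii
  set σ : ℝ := b.toReal ⊓ 1 with hσ
  have hσpos : 0 < σ := lt_min (ENNReal.toReal_pos hb.ne' hbtop) one_pos
  have hσ1 : σ ≤ 1 := min_le_right _ _
  have hσb : ENNReal.ofReal σ ≤ b := by
    refine (ENNReal.ofReal_le_ofReal (min_le_left _ _)).trans ?_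
    rw [ENNReal.ofReal_toReal hbtop]
  set e : ℕ → ℝ≥0∞ := fun j => EMetric.diam (t j) with he
  set r : ℕ → ℝ := fun j => (e j).toReal + σ * (2⁻¹ : ℝ) ^ j with hr
  have hetop : ∀ j, e j ≠ ⊤ := fun j => ((hdiam1 j).trans_lt (by norm_num)).ne
  have hrpos : ∀ j, 0 < r j := by
    intro j
    have : (0:ℝ) < σ * (2⁻¹:ℝ) ^ j := by positivity
    have h0 : (0:ℝ) ≤ (e j).toReal := ENNReal.toReal_nonneg
    simp only [hr]; linarith
  have hr2 : ∀ j, r j ≤ 2 := by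
    intro j
    have h1 : (e j).toReal ≤ 1 := by
      rw [← ENNReal.toReal_one]
      exact ENNReal.toReal_mono (by norm_num) (hdiam1 j)
    have h2 : σ * (2⁻¹:ℝ) ^ j ≤ 1 := by
      have : (2⁻¹:ℝ) ^ j ≤ 1 := pow_le_one₀ (by norm_num) (by norm_num)
      nlinarith
    simp only [hr]; linarith
  have hofr : ∀ j, ENNReal.ofReal (r j) = e j + ENNReal.ofReal (σ * (2⁻¹:ℝ) ^ j) := by
    intro j
    rw [hr]
    simp only []
    rw [ENNReal.ofReal_add ENNReal.toReal_nonneg (by positivity),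
      ENNReal.ofReal_toReal (hetop j)]
  -- the union bound
  set V : ℕ → Set (EuclideanSpace ℝ (Fin p)) := fun j =>
    {y | ∃ s ∈ S ∩ t j, ∃ x ∈ closedBall (0 : EuclideanSpace ℝ (Fin m)) 1, y = s - g x} with hV
  have hVsub : {y | ∃ s ∈ S, ∃ x ∈ closedBall (0 : EuclideanSpace ℝ (Fin m)) 1, y = s - g x}
      ⊆ ⋃ j, V j := by
    rintro y ⟨s, hs, x, hx, rfl⟩
    obtain ⟨j, hj⟩ := mem_iUnion.1 (hcov hs)
    exact mem_iUnion.2 ⟨j, ⟨s, ⟨hs, hj⟩, x, hx, rfl⟩⟩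
  -- per-index bound
  have hVj : ∀ j, volume (V j) ≤
      K2 * (⨆ _ : (t j).Nonempty, e j ^ d) + K2 * ENNReal.ofReal σ * (2⁻¹ : ℝ≥0∞) ^ j := by
    intro j
    have hrj := hrpos j
    have hrj2 := hr2 j
    set rj : ℝ := r j with hrj'
    have hediam : EMetric.diam (S ∩ t j) ≤ ENNReal.ofReal rj := by
      refine (EMetric.diam_mono inter_subset_right).trans ?_
      have hrj'' : rj = (e j).toReal + σ * (2⁻¹:ℝ) ^ j := rfl
      calc EMetric.diam (t j) = ENNReal.ofReal (e j).toReal :=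
            (ENNReal.ofReal_toReal (hetop j)).symm
        _ ≤ ENNReal.ofReal rj := by
            refine ENNReal.ofReal_le_ofReal ?_
            have : (0:ℝ) ≤ σ * (2⁻¹:ℝ) ^ j := by positivity
            rw [hrj'']; linarith
    have hSB := scaleBound hg (S ∩ t j) (ρ := rj / 2) (by positivity) hrj.le hediam
    -- inner identity
    have h3 : rj + (L : ℝ) * (2 * ((rj/2) * Real.sqrt m)) = rj * (1 + a) := by rw [ha]; ring
    -- count bound
    have h4 : ((2 * ⌈1/(rj/2)⌉₊ + 3 : ℕ) : ℝ) ≤ 14 / rj := by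
      have h5 : (⌈1/(rj/2)⌉₊ : ℝ) < 1/(rj/2) + 1 := Nat.ceil_lt_add_one (by positivity)
      have h6 : 1/(rj/2) = 2/rj := by field_simp
      have h7 : (5:ℝ) ≤ 10/rj := by rw [le_div_iff₀ hrj]; linarith
      push_cast
      rw [h6] at h5
      have h8 : 2*(2/rj) + 5 ≤ 14/rj := by
        have he' : 2*(2/rj) + 5 = (4 + 5*rj)/rj := by field_simp; ring
        rw [he', div_le_div_iff₀ hrj hrj]; nlinarith
      nlinarith
    have h9 : (14/rj)^m * (rj*(1+a))^p = c₁ * rj^(p-m) := by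
      have hp : rj^p = rj^m * rj^(p-m) := by rw [← pow_add]; congr 1; omega
      rw [hc₁, div_pow, mul_pow, hp]
      field_simp
    have h10 : rj^(p-m) ≤ 2^p * rj^d := by
      have hy : (0:ℝ) ≤ ((p-m : ℕ):ℝ) - d := by
        have hc : ((p-m:ℕ):ℝ) = (p:ℝ) - m := by rw [Nat.cast_sub hmp.le]
        rw [hc]; linarith
      have h11 : (rj:ℝ)^(p-m) = rj ^ (((p-m:ℕ)):ℝ) := (Real.rpow_natCast rj (p-m)).symm
      have h12 : rj ^ (((p-m:ℕ)):ℝ) = rj ^ d * rj ^ (((p-m:ℕ):ℝ) - d) := by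
        rw [← Real.rpow_add hrj]; ring_nf
      have h13 : rj ^ (((p-m:ℕ):ℝ) - d) ≤ 2 ^ (((p-m:ℕ):ℝ) - d) :=
        Real.rpow_le_rpow hrj.le hrj2 hy
      have h14 : (2:ℝ) ^ (((p-m:ℕ):ℝ) - d) ≤ 2 ^ (p:ℝ) := by
        refine Real.rpow_le_rpow_of_exponent_le one_le_two ?_
        have h15 : ((p-m:ℕ):ℝ) ≤ p := by exact_mod_cast Nat.cast_le.2 (Nat.sub_le p m)
        linarith
      have h16 : (2:ℝ) ^ (p:ℝ) = 2^p := Real.rpow_natCast 2 p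
      calc rj^(p-m) = rj ^ d * rj ^ (((p-m:ℕ):ℝ) - d) := by rw [h11, h12]
        _ ≤ rj ^ d * 2 ^ (p:ℝ) := by
            refine mul_le_mul_of_nonneg_left (h13.trans h14) ?_
            positivity
        _ = 2^p * rj^d := by rw [h16]; ring
    -- assemble ENNReal chain
    have hchain : volume (V j) ≤ K * (ENNReal.ofReal rj) ^ d := by
      refine hSB.trans ?_
      rw [h3]
      have hcount : (((2 * ⌈1/(rj/2)⌉₊ + 3) ^ m : ℕ) : ℝ≥0∞) ≤ ENNReal.ofReal ((14/rj)^m) := by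
        rw [← ENNReal.ofReal_natCast]
        refine ENNReal.ofReal_le_ofReal ?_
        rw [Nat.cast_pow]
        exact pow_le_pow_left₀ (Nat.cast_nonneg _) h4 m
      calc (((2 * ⌈1/(rj/2)⌉₊ + 3) ^ m : ℕ) : ℝ≥0∞) *
          (ENNReal.ofReal ((rj * (1+a)) ^ p) * vol1)
          ≤ ENNReal.ofReal ((14/rj)^m) * (ENNReal.ofReal ((rj * (1+a)) ^ p) * vol1) :=
            mul_le_mul_left hcount _
        _ = ENNReal.ofReal ((14/rj)^m * (rj * (1+a)) ^ p) * vol1 := by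
            rw [← mul_assoc, ← ENNReal.ofReal_mul (by positivity)]
        _ = ENNReal.ofReal (c₁ * rj^(p-m)) * vol1 := by rw [h9]
        _ ≤ ENNReal.ofReal (c₁ * 2^p * rj ^ d) * vol1 := by
            refine mul_le_mul_left (ENNReal.ofReal_le_ofReal ?_) _
            calc c₁ * rj^(p-m) ≤ c₁ * (2^p * rj^d) := by
                  exact mul_le_mul_of_nonneg_left h10 hc₁nn
              _ = c₁ * 2^p * rj ^ d := by ring
        _ = K * (ENNReal.ofReal rj) ^ d := by
            rw [hK, ENNReal.ofReal_mul (by positivity), ENNReal.ofReal_rpow_of_pos hrj]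
            ring
    -- split ofReal rj
    have hd0 : (0:ℝ) ≤ d := by linarith
    have hsplit : (ENNReal.ofReal rj) ^ d ≤ 2 ^ d * (e j ^ d + (ENNReal.ofReal (σ * (2⁻¹:ℝ)^j)) ^ d) := by
      rw [hofr j]
      exact rpow_add_le_aux hd0
    have hsup : e j ^ d ≤ ⨆ _ : (t j).Nonempty, e j ^ d := by
      rcases eq_empty_or_nonempty (t j) with hte | htn
      · have : e j = 0 := by rw [he]; simp [hte]; exact EMetric.diam_empty
        rw [this, ENNReal.zero_rpow_of_pos (by linarith)]
        exact zero_le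
      · rw [iSup_pos htn]
    have hσj : (ENNReal.ofReal (σ * (2⁻¹:ℝ)^j)) ^ d ≤ ENNReal.ofReal σ * (2⁻¹:ℝ≥0∞)^j := by
      have hx1 : ENNReal.ofReal (σ * (2⁻¹:ℝ)^j) = ENNReal.ofReal σ * (2⁻¹:ℝ≥0∞)^j := by
        rw [ENNReal.ofReal_mul hσpos.le, ENNReal.ofReal_pow (by norm_num)]
        congr 2
        rw [ENNReal.ofReal_inv_of_pos (by norm_num)]
        norm_num
      have hle1 : ENNReal.ofReal σ * (2⁻¹:ℝ≥0∞)^j ≤ 1 := by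
        refine mul_le_one' ?_ ?_
        · exact ENNReal.ofReal_le_one.2 hσ1
        · exact pow_le_one₀ (by norm_num) (by norm_num)
      rw [hx1]
      calc (ENNReal.ofReal σ * (2⁻¹:ℝ≥0∞)^j) ^ d
          ≤ (ENNReal.ofReal σ * (2⁻¹:ℝ≥0∞)^j) ^ (1:ℝ) :=
            ENNReal.rpow_le_rpow_of_exponent_ge hle1 hd
        _ = _ := ENNReal.rpow_one _
    calc volume (V j) ≤ K * (ENNReal.ofReal rj) ^ d := hchain
      _ ≤ K * (2 ^ d * (e j ^ d + (ENNReal.ofReal (σ * (2⁻¹:ℝ)^j)) ^ d)) :=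
          mul_le_mul_right hsplit _
      _ = K2 * e j ^ d + K2 * (ENNReal.ofReal (σ * (2⁻¹:ℝ)^j)) ^ d := by
          rw [hK2]; ring
      _ ≤ K2 * (⨆ _ : (t j).Nonempty, e j ^ d) + K2 * (ENNReal.ofReal σ * (2⁻¹:ℝ≥0∞)^j) := by
          exact add_le_add (mul_le_mul_right hsup _) (mul_le_mul_right hσj _)
      _ = K2 * (⨆ _ : (t j).Nonempty, e j ^ d) + K2 * ENNReal.ofReal σ * (2⁻¹:ℝ≥0∞)^j := by
          ring
  calc volume {y | ∃ s ∈ S, ∃ x ∈ closedBall (0 : EuclideanSpace ℝ (Fin m)) 1, y = s - g x}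
      ≤ ∑' j, volume (V j) := (measure_mono hVsub).trans (measure_iUnion_le _)
    _ ≤ ∑' j, (K2 * (⨆ _ : (t j).Nonempty, e j ^ d) + K2 * ENNReal.ofReal σ * (2⁻¹ : ℝ≥0∞) ^ j) :=
        ENNReal.tsum_le_tsum hVj
    _ = K2 * (∑' j, ⨆ _ : (t j).Nonempty, e j ^ d)
        + K2 * ENNReal.ofReal σ * ∑' j, (2⁻¹ : ℝ≥0∞) ^ j := by
        rw [ENNReal.tsum_add, ENNReal.tsum_mul_left, ENNReal.tsum_mul_left]
    _ ≤ K2 * b + K2 * ENNReal.ofReal σ * 2 := by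
        refine add_le_add (mul_le_mul_right hsum.le _) ?_
        refine mul_le_mul_right ?_ _
        rw [ENNReal.tsum_geometric]
        norm_num
    _ ≤ K2 * b + K2 * b * 2 := by
        refine add_le_add_right (mul_le_mul_left (mul_le_mul_right hσb _) _) _
    _ = 3 * K2 * b := by ring

lemma exists_lipschitz_approx {m p : ℕ}
    (f : EuclideanSpace ℝ (Fin m) → EuclideanSpace ℝ (Fin p))
    (hf : ContinuousOn f (closedBall 0 1)) {ε₁ : ℝ} (hε₁ : 0 < ε₁) :
    ∃ (L : ℝ≥0) (g : EuclideanSpace ℝ (Fin m) → EuclideanSpace ℝ (Fin p)),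
      LipschitzOnWith L g (closedBall 0 1) ∧
      ∀ x ∈ closedBall (0 : EuclideanSpace ℝ (Fin m)) 1, dist (g x) (f x) ≤ ε₁ := by
  classical
  set π : EuclideanSpace ℝ (Fin m) → EuclideanSpace ℝ (Fin m) :=
    fun x => (max ‖x‖ 1)⁻¹ • x with hπ
  have hπcont : Continuous π := by
    refine Continuous.smul (f := fun x : EuclideanSpace ℝ (Fin m) => (max ‖x‖ 1)⁻¹) ?_ continuous_id
    exact (continuous_norm.max continuous_const).inv₀ fun x => by positivity
  have hπmem : ∀ x, π x ∈ closedBall (0 : EuclideanSpace ℝ (Fin m)) 1 := by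
    intro x
    rw [mem_closedBall, dist_zero_right, hπ]
    simp only [norm_smul, norm_inv, Real.norm_eq_abs]
    rw [abs_of_pos (by positivity : (0:ℝ) < max ‖x‖ 1)]
    rw [inv_mul_le_iff₀ (by positivity), mul_one]
    exact le_max_left _ _
  have hπid : ∀ x ∈ closedBall (0 : EuclideanSpace ℝ (Fin m)) 1, π x = x := by
    intro x hx
    rw [mem_closedBall, dist_zero_right] at hx
    rw [hπ]
    simp only [max_eq_right hx, inv_one, one_smul]
  set F : EuclideanSpace ℝ (Fin m) → EuclideanSpace ℝ (Fin p) := f ∘ π with hF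
  have hFcont : Continuous F := hf.comp_continuous hπcont hπmem
  have hFf : ∀ x ∈ closedBall (0 : EuclideanSpace ℝ (Fin m)) 1, F x = f x := by
    intro x hx; rw [hF]; simp only [Function.comp_apply, hπid x hx]
  -- uniform continuity on closedBall 0 2
  have hFU : UniformContinuousOn F (closedBall 0 2) :=
    (isCompact_closedBall 0 2).uniformContinuousOn_of_continuous hFcont.continuousOn
  rw [Metric.uniformContinuousOn_iff] at hFU
  obtain ⟨R₀, hR₀, hFU⟩ := hFU (ε₁/2) (by positivity)
  set R : ℝ := min R₀ 1 with hR
  have hRpos : 0 < R := lt_min hR₀ one_pos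
  set φ : ContDiffBump (0 : EuclideanSpace ℝ (Fin m)) :=
    ⟨R/2, R, by positivity, by linarith⟩ with hφ
  set g : EuclideanSpace ℝ (Fin m) → EuclideanSpace ℝ (Fin p) :=
    (φ.normed volume) ⋆[ContinuousLinearMap.lsmul ℝ ℝ, volume] F with hg
  have hgsmooth : ContDiff ℝ 1 g :=
    φ.hasCompactSupport_normed.contDiff_convolution_left _ φ.contDiff_normed
      (hFcont.locallyIntegrable)
  have hgapprox : ∀ x ∈ closedBall (0 : EuclideanSpace ℝ (Fin m)) 1, dist (g x) (f x) ≤ ε₁ := by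
    intro x hx
    rw [← hFf x hx]
    refine (φ.dist_normed_convolution_le (ε := ε₁/2) hFcont.aestronglyMeasurable ?_).trans (by linarith)
    intro y hy
    have hyx : dist y x < R := by simpa [hφ] using hy
    refine (hFU y ?_ x ?_ (hyx.trans_le (min_le_left _ _))).le
    · rw [mem_closedBall] at hx ⊢
      calc dist y 0 ≤ dist y x + dist x 0 := dist_triangle _ _ _
        _ ≤ 2 := by
            have : R ≤ 1 := min_le_right _ _
            linarith [hyx]
    · exact (mem_closedBall.1 hx).trans (by norm_num)
  -- Lipschitz bound from the derivative
  have hfd : Continuous (fderiv ℝ g) := hgsmooth.continuous_fderiv one_ne_zero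
  obtain ⟨C, hC⟩ := (isCompact_closedBall (0 : EuclideanSpace ℝ (Fin m)) 1).exists_bound_of_continuousOn
    hfd.continuousOn
  have hlip : LipschitzOnWith (Real.toNNReal C) g (closedBall 0 1) := by
    refine LipschitzOnWith.of_dist_le' ?_
    intro x hx y hy
    rw [dist_eq_norm, dist_eq_norm]
    exact (convex_closedBall _ _).norm_image_sub_le_of_norm_fderiv_le
      (fun z _ => (hgsmooth.differentiable one_ne_zero).differentiableAt)
      (fun z hz => hC z hz) hy hx
  exact ⟨_, g, hlip, hgapprox⟩

/-- The avoidance–approximation lemma for the closed unit disk: a continuous map from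
the closed unit ball of `𝔼^{l+1}` into `𝔼^{n+1}` whose boundary values avoid a closed set `S`
of vanishing `(n-k)`-dimensional Hausdorff measure can be uniformly approximated, keeping
the boundary values, by a continuous map whose image avoids `S`. -/
theorem avoidance_approximation_disk
    (n l k : ℕ) (hn : 1 ≤ n) (hl : 1 ≤ l) (hk : 1 ≤ k) (hlk : l ≤ k) (hkn : k ≤ n)
    (S : Set (EuclideanSpace ℝ (Fin (n + 1)))) (hScl : IsClosed S)
    (hS : μH[(n : ℝ) - k] S = 0)
    (f : EuclideanSpace ℝ (Fin (l + 1)) → EuclideanSpace ℝ (Fin (n + 1)))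
    (hf : ContinuousOn f (closedBall 0 1))
    (hfS : (f '' sphere 0 1) ∩ S = ∅)
    (ε : ℝ) (hε : 0 < ε) :
    ∃ ftilde : EuclideanSpace ℝ (Fin (l + 1)) → EuclideanSpace ℝ (Fin (n + 1)),
      ContinuousOn ftilde (closedBall 0 1) ∧
      (∀ x ∈ sphere (0 : EuclideanSpace ℝ (Fin (l + 1))) 1, ftilde x = f x) ∧
      (∀ x ∈ closedBall (0 : EuclideanSpace ℝ (Fin (l + 1))) 1, ‖f x - ftilde x‖ < ε) ∧
      (ftilde '' closedBall 0 1) ∩ S = ∅ := by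
  classical
  rcases eq_or_lt_of_le hkn with hkn' | hkn'
  · -- k = n : the set S is empty
    have h0 : (n : ℝ) - k = 0 := by rw [hkn']; ring
    rw [h0] at hS
    have hSemp : S = ∅ := by
      rcases eq_empty_or_nonempty S with h | h
      · exact h
      · exfalso
        have := MeasureTheory.Measure.one_le_hausdorffMeasure_zero_of_nonempty h
        rw [hS] at this
        exact absurd this (by norm_num)
    refine ⟨f, hf, fun x _ => rfl, fun x _ => by simpa using hε, by simp [hSemp]⟩
  · -- k < n
    have hmp : l + 1 < n + 1 := by omega
    have hd1 : 1 ≤ (n : ℝ) - k := by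
      have : (k:ℝ) + 1 ≤ n := by exact_mod_cast hkn'
      linarith
    have hdmp : (n : ℝ) - k + (l+1 : ℕ) ≤ ((n+1 : ℕ) : ℝ) := by
      have hlk' : (l:ℝ) ≤ k := by exact_mod_cast hlk
      push_cast
      linarith
    -- the image of the sphere avoids a δ-thickening of S
    set t : Set (EuclideanSpace ℝ (Fin (n+1))) := f '' sphere 0 1 with ht
    have htc : IsCompact t :=
      (isCompact_sphere (0 : EuclideanSpace ℝ (Fin (l+1))) 1).image_of_continuousOn
        (hf.mono sphere_subset_closedBall)
    have hsub : t ⊆ Sᶜ := by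
      intro y hy hyS
      exact absurd (mem_inter hy hyS) (by rw [hfS]; exact notMem_empty y)
    obtain ⟨δ, hδ, hthick⟩ := htc.exists_thickening_subset_open hScl.isOpen_compl hsub
    set ε₁ : ℝ := min (ε/3) (δ/8) with hε₁def
    have hε₁ : 0 < ε₁ := lt_min (by positivity) (by positivity)
    obtain ⟨L, g, hglip, hgapprox⟩ := exists_lipschitz_approx (m := l+1) (p := n+1) f hf hε₁
    -- the bad translation set
    set V : Set (EuclideanSpace ℝ (Fin (n+1))) :=
      {y | ∃ s ∈ S, ∃ x ∈ closedBall (0 : EuclideanSpace ℝ (Fin (l+1))) 1, y = s - g x} with hV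
    have hVnull : volume V = 0 := coreNull (m := l+1) (p := n+1) hmp hd1 hdmp hS hglip
    have hnsub : ¬ (ball (0 : EuclideanSpace ℝ (Fin (n+1))) ε₁ ⊆ V) := by
      intro hsub'
      have h1 : volume (ball (0 : EuclideanSpace ℝ (Fin (n+1))) ε₁) = 0 :=
        le_antisymm (hVnull ▸ measure_mono hsub') zero_le
      exact absurd h1 (measure_ball_pos volume 0 hε₁).ne'
    obtain ⟨v, hvball, hvV⟩ := not_subset.1 hnsub
    have hvnorm : ‖v‖ < ε₁ := by rwa [mem_ball_zero_iff] at hvball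
    -- uniform continuity of f
    have hfU := (isCompact_closedBall (0 : EuclideanSpace ℝ (Fin (l+1))) 1).uniformContinuousOn_of_continuous hf
    rw [Metric.uniformContinuousOn_iff] at hfU
    obtain ⟨η₀, hη₀pos, hη₀⟩ := hfU (δ/2) (by positivity)
    set η : ℝ := min (η₀/2) (1/2) with hηdef
    have hηpos : 0 < η := lt_min (by positivity) (by norm_num)
    have hη1 : η ≤ 1/2 := min_le_right _ _
    set ψ : EuclideanSpace ℝ (Fin (l+1)) → ℝ := fun x => max 0 (min 1 ((1 - ‖x‖)/η)) with hψ
    have hψcont : Continuous ψ :=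
      continuous_const.max (continuous_const.min
        ((continuous_const.sub continuous_norm).div_const η))
    have hψ01 : ∀ x, 0 ≤ ψ x ∧ ψ x ≤ 1 := by
      intro x
      refine ⟨le_max_left _ _, ?_⟩
      rw [hψ]
      simp only [max_le_iff]
      exact ⟨by norm_num, (min_le_left _ _)⟩
    set w : EuclideanSpace ℝ (Fin (l+1)) → EuclideanSpace ℝ (Fin (n+1)) :=
      fun x => g x + v - f x with hw
    set ftilde : EuclideanSpace ℝ (Fin (l+1)) → EuclideanSpace ℝ (Fin (n+1)) :=
      fun x => f x + ψ x • w x with hft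
    have hwnorm : ∀ x ∈ closedBall (0 : EuclideanSpace ℝ (Fin (l+1))) 1, ‖w x‖ < 2 * ε₁ := by
      intro x hx
      have h1 : w x = (g x - f x) + v := by rw [hw]; abel
      have h2 : ‖g x - f x‖ ≤ ε₁ := by
        rw [← dist_eq_norm]; exact hgapprox x hx
      calc ‖w x‖ ≤ ‖g x - f x‖ + ‖v‖ := by rw [h1]; exact norm_add_le _ _
        _ < 2 * ε₁ := by linarith
    have hdiff : ∀ x ∈ closedBall (0 : EuclideanSpace ℝ (Fin (l+1))) 1,
        ‖f x - ftilde x‖ < 2 * ε₁ := by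
      intro x hx
      have h1 : f x - ftilde x = -(ψ x • w x) := by rw [hft]; exact sub_add_cancel_left _ _
      rw [h1, norm_neg, norm_smul, Real.norm_eq_abs, abs_of_nonneg (hψ01 x).1]
      calc ψ x * ‖w x‖ ≤ 1 * ‖w x‖ :=
            mul_le_mul_of_nonneg_right (hψ01 x).2 (norm_nonneg _)
        _ = ‖w x‖ := one_mul _
        _ < 2 * ε₁ := hwnorm x hx
    refine ⟨ftilde, ?_, ?_, ?_, ?_⟩
    · -- continuity
      exact hf.add ((hψcont.continuousOn).smul
        (((hglip.continuousOn).add continuousOn_const).sub hf))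
    · -- boundary values
      intro x hx
      rw [mem_sphere_zero_iff_norm] at hx
      have : ψ x = 0 := by
        rw [hψ]; simp only [hx, sub_self, zero_div, min_comm]
        simp
      rw [hft]
      simp only [this, zero_smul, add_zero]
    · -- uniform closeness
      intro x hx
      have := hdiff x hx
      have h2 : ε₁ ≤ ε/3 := min_le_left _ _
      linarith
    · -- avoidance
      rw [eq_empty_iff_forall_notMem]
      rintro y ⟨⟨x, hx, rfl⟩, hyS⟩
      have hxnorm : ‖x‖ ≤ 1 := by rwa [mem_closedBall, dist_zero_right] at hx
      rcases le_or_gt ‖x‖ (1 - η) with hcase | hcase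
      · -- interior: ftilde x = g x + v
        have hψ1 : ψ x = 1 := by
          have h1 : (1:ℝ) ≤ (1 - ‖x‖)/η := by
            rw [le_div_iff₀ hηpos]; linarith
          rw [hψ]
          simp only [min_eq_left h1]
          · norm_num
        have heq : ftilde x = g x + v := by
          rw [hft]; simp only [hψ1, one_smul, hw]; abel
        refine hvV ⟨ftilde x, hyS, x, hx, ?_⟩
        rw [heq]; abel
      · -- near the boundary
        have hxpos : (0:ℝ) < ‖x‖ := by linarith
        set u : EuclideanSpace ℝ (Fin (l+1)) := ‖x‖⁻¹ • x with hu
        have hunorm : ‖u‖ = 1 := by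
          rw [hu, norm_smul, norm_inv, norm_norm, inv_mul_cancel₀ hxpos.ne']
        have husphere : u ∈ sphere (0 : EuclideanSpace ℝ (Fin (l+1))) 1 :=
          mem_sphere_zero_iff_norm.2 hunorm
        have hucb : u ∈ closedBall (0 : EuclideanSpace ℝ (Fin (l+1))) 1 :=
          sphere_subset_closedBall husphere
        have hdist_xu : dist x u = 1 - ‖x‖ := by
          have h1 : x - u = (1 - ‖x‖⁻¹) • x := by
            rw [hu, sub_smul, one_smul]
          rw [dist_eq_norm, h1, norm_smul, Real.norm_eq_abs]
          have h2 : (1:ℝ) ≤ ‖x‖⁻¹ := by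
            rw [le_inv_comm₀ one_pos hxpos]; simpa using hxnorm
          rw [abs_of_nonpos (by linarith), neg_sub, sub_mul, inv_mul_cancel₀ hxpos.ne',
            one_mul]
        have hdxu : dist x u < η₀ := by
          rw [hdist_xu]
          have : η ≤ η₀/2 := min_le_left _ _
          linarith
        have hfxu : dist (f x) (f u) < δ/2 := hη₀ x hx u hucb hdxu
        have hftx : dist (ftilde x) (f x) < 2 * ε₁ := by
          rw [dist_eq_norm, ← norm_neg, neg_sub]
          exact hdiff x hx
        have hε₁δ : ε₁ ≤ δ/8 := min_le_right _ _
        have hmem : ftilde x ∈ thickening δ t := by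
          rw [mem_thickening_iff]
          refine ⟨f u, mem_image_of_mem f husphere, ?_⟩
          calc dist (ftilde x) (f u) ≤ dist (ftilde x) (f x) + dist (f x) (f u) :=
                dist_triangle _ _ _
            _ < δ := by linarith
        exact hthick hmem hyS
end

section
/- Let n, l, k be positive integers with l ≤ k ≤ n. Let K ⊆ 𝔼^{l+1} be a compact set, let g : K → 𝔼^{n+1} be a Lipschitz map (with some Lipschitz constant), and let S ⊆ 𝔼^{n+1} be a set with μH^{n-k}(S) = 0. Then the difference set {g(x) − s : x ∈ K, s ∈ S} ⊆ 𝔼^{n+1} is Lebesgue-null, i.e. volume({g(x) − s : x ∈ K, s ∈ S}) = 0. In particular, the complement of this set is dense in 𝔼^{n+1}. -/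
open Metric MeasureTheory Set
open scoped ENNReal NNReal

lemma exists_cover_of_null {Z : Type*} [EMetricSpace Z] [MeasurableSpace Z] [BorelSpace Z]
    {d : ℝ} (hd : 0 < d) {S : Set Z} (h : μH[d] S = 0) {r : ℝ≥0∞} (hr : 0 < r)
    {ε : ℝ≥0∞} (hε : 0 < ε) :
    ∃ t : ℕ → Set Z, (S ⊆ ⋃ i, t i) ∧ (∀ i, EMetric.diam (t i) ≤ r) ∧
      ∑' i, EMetric.diam (t i) ^ d < ε := by
  have h0 : (⨅ (t : ℕ → Set Z) (_ : S ⊆ ⋃ i, t i) (_ : ∀ i, EMetric.diam (t i) ≤ r),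
      ∑' i, ⨆ _ : (t i).Nonempty, EMetric.diam (t i) ^ d) < ε := by
    have hle : (⨅ (t : ℕ → Set Z) (_ : S ⊆ ⋃ i, t i) (_ : ∀ i, EMetric.diam (t i) ≤ r),
        ∑' i, ⨆ _ : (t i).Nonempty, EMetric.diam (t i) ^ d) ≤ μH[d] S := by
      rw [MeasureTheory.Measure.hausdorffMeasure_apply]
      exact le_iSup₂ (f := fun (r : ℝ≥0∞) (_ : 0 < r) =>
        ⨅ (t : ℕ → Set Z) (_ : S ⊆ ⋃ i, t i) (_ : ∀ i, EMetric.diam (t i) ≤ r),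
          ∑' i, ⨆ _ : (t i).Nonempty, EMetric.diam (t i) ^ d) r hr
    rw [h] at hle
    exact lt_of_le_of_lt hle hε
  rw [iInf_lt_iff] at h0
  obtain ⟨t, ht⟩ := h0
  rw [iInf_lt_iff] at ht
  obtain ⟨hcov, ht⟩ := ht
  rw [iInf_lt_iff] at ht
  obtain ⟨hdiam, ht⟩ := ht
  refine ⟨t, hcov, hdiam, ?_⟩
  refine lt_of_le_of_lt (le_of_eq ?_) ht
  refine tsum_congr fun i => ?_
  rcases eq_empty_or_nonempty (t i) with he | hne
  · simp [he, EMetric.diam, Metric.ediam_empty, ENNReal.zero_rpow_of_pos hd]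
  · simp [hne]

lemma grid_cover (m : ℕ) {R ρ : ℝ} (hρ : 0 < ρ) (hR : 1 ≤ R) (hρR : ρ ≤ R) :
    ∃ (T : Finset (Fin m → ℤ)) (Q : (Fin m → ℤ) → Set (EuclideanSpace ℝ (Fin m))),
      (closedBall (0 : EuclideanSpace ℝ (Fin m)) R ⊆ ⋃ z ∈ T, Q z) ∧
      (∀ z, EMetric.diam (Q z) ≤ ENNReal.ofReal (Real.sqrt m * ρ)) ∧
      ((T.card : ℝ) ≤ (5 * R / ρ) ^ m) := by
  set M : ℤ := ⌈R / ρ⌉ with hM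
  have hM0 : 0 ≤ M := Int.ceil_nonneg (by positivity)
  refine ⟨Fintype.piFinset (fun _ : Fin m => Finset.Icc (-M) M),
    fun z => {x | ∀ j, x j ∈ Set.Icc ((z j : ℝ) * ρ) ((z j : ℝ) * ρ + ρ)}, ?_, ?_, ?_⟩
  · -- cover
    intro x hx
    rw [mem_closedBall_zero_iff] at hx
    have hcoord : ∀ j, |x j| ≤ R := by
      intro j
      have h1 : |x j| = Real.sqrt ((x j) ^ 2) := (Real.sqrt_sq_eq_abs _).symm
      have h2 : (x j) ^ 2 ≤ ∑ i, ‖x i‖ ^ 2 := by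
        have := Finset.single_le_sum (f := fun i => ‖x i‖ ^ 2)
          (fun i _ => by positivity) (Finset.mem_univ j)
        simpa [Real.norm_eq_abs, sq_abs] using this
      rw [h1]
      calc Real.sqrt ((x j) ^ 2) ≤ Real.sqrt (∑ i, ‖x i‖ ^ 2) := Real.sqrt_le_sqrt h2
        _ = ‖x‖ := (EuclideanSpace.norm_eq x).symm
        _ ≤ R := hx
    refine mem_iUnion₂.2 ⟨fun j => ⌊x j / ρ⌋, ?_, ?_⟩
    · rw [Fintype.mem_piFinset]
      intro j
      rw [Finset.mem_Icc]
      have habs := abs_le.mp (hcoord j)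
      have hd1 : -(R / ρ) ≤ x j / ρ := by
        rw [← neg_div]
        gcongr
        exact habs.1
      have hd2 : x j / ρ ≤ R / ρ := by
        gcongr
        exact habs.2
      constructor
      · calc -M = ⌊-(R / ρ)⌋ := by rw [Int.floor_neg]
          _ ≤ ⌊x j / ρ⌋ := Int.floor_le_floor hd1
      · calc ⌊x j / ρ⌋ ≤ ⌊R / ρ⌋ := Int.floor_le_floor hd2
          _ ≤ M := Int.floor_le_ceil _
    · intro j
      have h1 : (⌊x j / ρ⌋ : ℝ) ≤ x j / ρ := Int.floor_le _
      have h2 : x j / ρ < ⌊x j / ρ⌋ + 1 := Int.lt_floor_add_one _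
      constructor
      · calc (⌊x j / ρ⌋ : ℝ) * ρ ≤ (x j / ρ) * ρ := by nlinarith
          _ = x j := by field_simp
      · have : x j < ((⌊x j / ρ⌋ : ℝ) + 1) * ρ := by
          calc x j = (x j / ρ) * ρ := by field_simp
            _ < ((⌊x j / ρ⌋ : ℝ) + 1) * ρ := by nlinarith
        nlinarith
  · -- diam
    intro z
    refine EMetric.diam_le fun x hx y hy => ?_
    rw [edist_dist]
    refine ENNReal.ofReal_le_ofReal ?_
    rw [EuclideanSpace.dist_eq]
    have hb : ∀ j, dist (x j) (y j) ≤ ρ := fun j => by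
      have := Real.dist_le_of_mem_Icc (hx j) (hy j)
      linarith [this]
    calc Real.sqrt (∑ j, dist (x j) (y j) ^ 2) ≤ Real.sqrt (∑ _j : Fin m, ρ ^ 2) := by
          refine Real.sqrt_le_sqrt (Finset.sum_le_sum fun j _ => ?_)
          exact pow_le_pow_left₀ dist_nonneg (hb j) 2
      _ = Real.sqrt m * ρ := by
          rw [Finset.sum_const, Finset.card_univ, Fintype.card_fin, nsmul_eq_mul,
            Real.sqrt_mul (Nat.cast_nonneg m), Real.sqrt_sq hρ.le]
  · -- card
    rw [Fintype.card_piFinset]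
    have hcard : ∀ j : Fin m, ((Finset.Icc (-M) M).card : ℝ) ≤ 5 * R / ρ := by
      intro j
      rw [Int.card_Icc]
      have h1 : (M + 1 - -M).toNat = 2 * M + 1 := by omega
      have h2 : ((2 * M + 1 : ℤ) : ℝ) ≤ 5 * R / ρ := by
        have hMle : (M : ℝ) ≤ R / ρ + 1 := by
          have := (Int.ceil_lt_add_one (R / ρ)).le
          rw [hM]; push_cast; linarith
        have hRρ : 1 ≤ R / ρ := (one_le_div hρ).mpr hρR
        have h3 : (3 : ℝ) ≤ 3 * R / ρ := by
          rw [mul_div_assoc]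
          linarith
        push_cast at hMle ⊢
        have h5 : 5 * R / ρ = 2 * (R / ρ) + 3 * R / ρ := by ring
        have h6 : 2 * (M:ℝ) + 1 ≤ 2 * (R / ρ + 1) + 1 := by linarith
        rw [h5]
        have h7 : 2 * ((R:ℝ) / ρ + 1) + 1 = 2 * (R / ρ) + 3 := by ring
        linarith
      have h1' : ((M + 1 - -M).toNat : ℝ) = ((2 * M + 1 : ℤ) : ℝ) := by
        exact_mod_cast congrArg (fun z : ℤ => (z : ℝ)) h1
      rw [h1']
      exact h2
    calc ((∏ j : Fin m, (Finset.Icc (-M) M).card : ℕ) : ℝ)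
        = ∏ j : Fin m, ((Finset.Icc (-M) M).card : ℝ) := by push_cast; ring
      _ ≤ ∏ _j : Fin m, (5 * R / ρ) := Finset.prod_le_prod (fun j _ => by positivity)
          (fun j _ => hcard j)
      _ = (5 * R / ρ) ^ m := by rw [Finset.prod_const, Finset.card_univ, Fintype.card_fin]

lemma real_bound {R A r : ℝ} (hR : 1 ≤ R) (hA : 1 ≤ A) (hr : 0 < r) (hr1 : r ≤ 1)
    (l n k : ℕ) (hlk : l ≤ k) (hkn : k ≤ n) :
    (5 * R / r) ^ (l + 1) * (A * r) ^ (n + 1) ≤ ((5 * R) ^ (l + 1) * A ^ (n + 1)) * r ^ (n - k) := by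
  have h1 : (5 * R / r) ^ (l + 1) * (A * r) ^ (n + 1)
      = (5 * R) ^ (l + 1) * A ^ (n + 1) * (r ^ (n + 1) / r ^ (l + 1)) := by
    rw [div_pow, mul_pow]
    field_simp
    ring
  have h2 : r ^ (n + 1) / r ^ (l + 1) = r ^ (n - l) := by
    rw [div_eq_iff (pow_ne_zero _ hr.ne'), ← pow_add]
    congr 1
    omega
  have h3 : r ^ (n - l) ≤ r ^ (n - k) := pow_le_pow_of_le_one hr.le hr1 (by omega)
  rw [h1, h2]
  exact mul_le_mul_of_nonneg_left h3 (by positivity)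

lemma max_pow_le {a b : ℝ} (ha : 0 ≤ a) (hb : 0 ≤ b) (p : ℕ) :
    max a b ^ p ≤ a ^ p + b ^ p := by
  rcases le_total a b with h | h
  · rw [max_eq_right h]
    nlinarith [pow_nonneg ha p]
  · rw [max_eq_left h]
    nlinarith [pow_nonneg hb p]

/-- The key measure-theoretic step of the avoidance–approximation lemma: if `g` is a
Lipschitz map on a compact set `K ⊆ 𝔼^{l+1}` and `S ⊆ 𝔼^{n+1}` has vanishing
`(n-k)`-dimensional Hausdorff measure (with `l ≤ k ≤ n`), then the difference set
`{g x - s : x ∈ K, s ∈ S}` is Lebesgue-null, and in particular its complement is dense. -/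
theorem difference_set_null
    (n l k : ℕ) (hn : 1 ≤ n) (hl : 1 ≤ l) (hk : 1 ≤ k) (hlk : l ≤ k) (hkn : k ≤ n)
    (K : Set (EuclideanSpace ℝ (Fin (l + 1)))) (hK : IsCompact K)
    (g : EuclideanSpace ℝ (Fin (l + 1)) → EuclideanSpace ℝ (Fin (n + 1)))
    (C : ℝ≥0) (hg : LipschitzOnWith C g K)
    (S : Set (EuclideanSpace ℝ (Fin (n + 1))))
    (hS : μH[(n : ℝ) - k] S = 0) :
    volume {z : EuclideanSpace ℝ (Fin (n + 1)) | ∃ x ∈ K, ∃ s ∈ S, z = g x - s} = 0 ∧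
    Dense {z : EuclideanSpace ℝ (Fin (n + 1)) | ∃ x ∈ K, ∃ s ∈ S, z = g x - s}ᶜ := by
  set D : Set (EuclideanSpace ℝ (Fin (n + 1))) := {z | ∃ x ∈ K, ∃ s ∈ S, z = g x - s} with hD
  have hvol : volume D = 0 := by
    rcases eq_or_lt_of_le hkn with rfl | hkn'
    · -- k = n : S is empty
      have hS0 : μH[(0 : ℝ)] S = 0 := by
        rw [show (0 : ℝ) = (k : ℝ) - k by ring]
        exact hS
      have hSempty : S = ∅ := by
        by_contra hne
        obtain ⟨s, hs⟩ := nonempty_iff_ne_empty.2 hne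
        have h1 : (1 : ℝ≥0∞) ≤ μH[(0:ℝ)] S := by
          rw [← MeasureTheory.Measure.hausdorffMeasure_zero_singleton s]
          exact measure_mono (singleton_subset_iff.2 hs)
        rw [hS0] at h1
        simp at h1
      have : D = ∅ := by
        rw [hD, hSempty]
        simp
      simp [this]
    · -- k < n
      have hH : μH[(n : ℝ) + 1] D = 0 := by
        have hd2 : 0 < (n : ℝ) - k := by
          have h : (k : ℝ) < n := by exact_mod_cast hkn'
          linarith
        obtain ⟨R₀, hR₀⟩ := hK.isBounded.subset_closedBall 0
        set R : ℝ := max 1 R₀ with hRdef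
        have hR1 : (1 : ℝ) ≤ R := le_max_left _ _
        have hKR : K ⊆ closedBall 0 R :=
          hR₀.trans (closedBall_subset_closedBall (le_max_right _ _))
        set A : ℝ := (C : ℝ) * Real.sqrt (l + 1) + 1 with hAdef
        have hA1 : 1 ≤ A := le_add_of_nonneg_left (by positivity)
        set B : ℝ := (5 * R) ^ (l + 1) * A ^ (n + 1) with hBdef
        have hB : 0 < B := by positivity
        suffices hq : ∀ q : ℝ, 0 < q → μH[(n : ℝ) + 1] D ≤ ENNReal.ofReal q by
          refine le_antisymm ?_ zero_le
          refine ENNReal.le_of_forall_pos_le_add fun ε hε _ => ?_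
          rw [zero_add]
          calc μH[(n : ℝ) + 1] D ≤ ENNReal.ofReal (ε : ℝ) := hq ε (by exact_mod_cast hε)
            _ = (ε : ℝ≥0∞) := ENNReal.ofReal_coe_nnreal
        intro q hq
        set εr : ℝ := q / (2 * B) with hεrdef
        have hεr : 0 < εr := by positivity
        set ρ : ℕ → ℝ := fun j => min 1 (min R (1 / (j + 1))) with hρdef
        have hρpos : ∀ j : ℕ, 0 < ρ j := fun j =>
          lt_min one_pos (lt_min (by linarith) (by positivity))
        have hρ1 : ∀ j, ρ j ≤ 1 := fun j => min_le_left _ _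
        have hρR : ∀ j, ρ j ≤ R := fun j => le_trans (min_le_right _ _) (min_le_left _ _)
        have hρj : ∀ j : ℕ, ρ j ≤ 1 / (j + 1) :=
          fun j => le_trans (min_le_right _ _) (min_le_right _ _)
        -- covers of S at scale ρ j
        have hcovex : ∀ j : ℕ, ∃ t : ℕ → Set (EuclideanSpace ℝ (Fin (n + 1))),
            (S ⊆ ⋃ i, t i) ∧ (∀ i, EMetric.diam (t i) ≤ ENNReal.ofReal (ρ j)) ∧
            ∑' i, EMetric.diam (t i) ^ ((n : ℝ) - k) < ENNReal.ofReal εr :=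
          fun j => exists_cover_of_null hd2 hS (ENNReal.ofReal_pos.mpr (hρpos j))
            (ENNReal.ofReal_pos.mpr hεr)
        choose t htcov htdiam htsum using hcovex
        -- modified radii
        set rr : ℕ → ℕ → ℝ := fun j i => max (EMetric.diam (t j i)).toReal
          (min (ρ j) ((εr / 2 ^ (i + 1)) ^ (((n - k : ℕ) : ℝ))⁻¹)) with hrrdef
        have hbase : ∀ i : ℕ, (0 : ℝ) < εr / 2 ^ (i + 1) := fun i => by positivity
        have hrrpos : ∀ j i, 0 < rr j i := fun j i =>
          lt_max_of_lt_right (lt_min (hρpos j) (Real.rpow_pos_of_pos (hbase i) _))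
        have hdiamfin : ∀ j i, EMetric.diam (t j i) ≠ ⊤ := fun j i =>
          ((htdiam j i).trans_lt ENNReal.ofReal_lt_top).ne
        have hrrρ : ∀ j i, rr j i ≤ ρ j := fun j i => max_le
          (ENNReal.toReal_le_of_le_ofReal (hρpos j).le (htdiam j i)) (min_le_left _ _)
        have hdiam_rr : ∀ j i, EMetric.diam (t j i) ≤ ENNReal.ofReal (rr j i) := fun j i => by
          rw [← ENNReal.ofReal_toReal (hdiamfin j i)]
          exact ENNReal.ofReal_le_ofReal (le_max_left _ _)
        have hnk0 : ((n - k : ℕ) : ℝ) ≠ 0 := by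
          have : 0 < n - k := by omega
          exact_mod_cast this.ne'
        have hrrpow : ∀ j i, rr j i ^ (n - k) ≤
            (EMetric.diam (t j i)).toReal ^ (n - k) + εr / 2 ^ (i + 1) := by
          intro j i
          have hb0 : 0 ≤ min (ρ j) ((εr / 2 ^ (i + 1)) ^ (((n - k : ℕ) : ℝ))⁻¹) :=
            le_min (hρpos j).le (Real.rpow_pos_of_pos (hbase i) _).le
          have h1 := max_pow_le (a := (EMetric.diam (t j i)).toReal) ENNReal.toReal_nonneg hb0 (n - k)
          have h3 : ((εr / 2 ^ (i + 1)) ^ (((n - k : ℕ) : ℝ))⁻¹) ^ (n - k)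
              = εr / 2 ^ (i + 1) := by
            rw [← Real.rpow_natCast ((εr / 2 ^ (i + 1)) ^ (((n - k : ℕ) : ℝ))⁻¹) (n - k),
              ← Real.rpow_mul (hbase i).le, inv_mul_cancel₀ hnk0, Real.rpow_one]
          have h2 : (min (ρ j) ((εr / 2 ^ (i + 1)) ^ (((n - k : ℕ) : ℝ))⁻¹)) ^ (n - k)
              ≤ εr / 2 ^ (i + 1) := by
            calc _ ≤ ((εr / 2 ^ (i + 1)) ^ (((n - k : ℕ) : ℝ))⁻¹) ^ (n - k) :=
                  pow_le_pow_left₀ hb0 (min_le_right _ _) _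
              _ = _ := h3
          exact h1.trans (by linarith)
        -- grid covers of K at scale rr j i
        have hgrids : ∀ j i, ∃ (T : Finset (Fin (l + 1) → ℤ))
            (Q : (Fin (l + 1) → ℤ) → Set (EuclideanSpace ℝ (Fin (l + 1)))),
            (closedBall (0 : EuclideanSpace ℝ (Fin (l + 1))) R ⊆ ⋃ z ∈ T, Q z) ∧
            (∀ z, EMetric.diam (Q z) ≤ ENNReal.ofReal (Real.sqrt (l + 1) * rr j i)) ∧
            ((T.card : ℝ) ≤ (5 * R / rr j i) ^ (l + 1)) := fun j i => by
          have := grid_cover (l + 1) (hrrpos j i) hR1 ((hrrρ j i).trans (hρR j))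
          simpa using this
        choose T Q hQcov hQdiam hQcard using hgrids
        -- pieces
        set P : ℕ → ℕ × (Fin (l + 1) → ℤ) → Set (EuclideanSpace ℝ (Fin (n + 1))) := fun j p =>
          if p.2 ∈ T j p.1 then
            {w | ∃ x ∈ K ∩ Q j p.1 p.2, ∃ s ∈ t j p.1, w = g x - s} else ∅ with hPdef
        have hPdiam : ∀ j i z, EMetric.diam (P j (i, z)) ≤ ENNReal.ofReal (A * rr j i) := by
          intro j i z
          by_cases hz : z ∈ T j i
          · rw [hPdef]
            simp only [hz, if_pos]
            refine EMetric.diam_le ?_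
            rintro w ⟨x, ⟨hxK, hxQ⟩, s, hs, rfl⟩ w' ⟨x', ⟨hxK', hxQ'⟩, s', hs', rfl⟩
            calc edist (g x - s) (g x' - s')
                = ENNReal.ofReal (dist (g x - s) (g x' - s')) := edist_dist _ _
              _ ≤ ENNReal.ofReal (dist (g x) (g x') + dist s s') :=
                  ENNReal.ofReal_le_ofReal (dist_sub_sub_le _ _ _ _)
              _ = ENNReal.ofReal (dist (g x) (g x')) + ENNReal.ofReal (dist s s') :=
                  ENNReal.ofReal_add dist_nonneg dist_nonneg
              _ = edist (g x) (g x') + edist s s' := by rw [edist_dist, edist_dist]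
              _ ≤ (C : ℝ≥0∞) * edist x x' + EMetric.diam (t j i) :=
                  add_le_add (hg hxK hxK') (EMetric.edist_le_diam_of_mem hs hs')
              _ ≤ (C : ℝ≥0∞) * ENNReal.ofReal (Real.sqrt (l + 1) * rr j i)
                  + ENNReal.ofReal (rr j i) :=
                  add_le_add (mul_le_mul_right
                    ((EMetric.edist_le_diam_of_mem hxQ hxQ').trans (hQdiam j i z)) _)
                    (hdiam_rr j i)
              _ = ENNReal.ofReal ((C : ℝ) * (Real.sqrt (l + 1) * rr j i))
                  + ENNReal.ofReal (rr j i) := by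
                  rw [ENNReal.ofReal_mul C.coe_nonneg, ENNReal.ofReal_coe_nnreal]
              _ = ENNReal.ofReal ((C : ℝ) * (Real.sqrt (l + 1) * rr j i) + rr j i) :=
                  (ENNReal.ofReal_add (by positivity) (hrrpos j i).le).symm
              _ = ENNReal.ofReal (A * rr j i) := by rw [hAdef]; ring_nf
          · rw [hPdef]
            simp only [hz, if_neg, not_false_iff]
            simp [EMetric.diam]
        -- apply the liminf bound
        refine (MeasureTheory.Measure.hausdorffMeasure_le_liminf_tsum
          (ι := fun _ : ℕ => ℕ × (Fin (l + 1) → ℤ)) ((n : ℝ) + 1) D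
          (l := Filter.atTop) (fun j => ENNReal.ofReal (A * ρ j)) ?_ P ?_ ?_).trans ?_
        · -- tendsto
          have h0 : Filter.Tendsto (fun j : ℕ => A * (1 / ((j : ℝ) + 1))) Filter.atTop (nhds 0) := by
            have h1 := tendsto_one_div_add_atTop_nhds_zero_nat (𝕜 := ℝ)
            have := h1.const_mul A
            simpa using this
          refine tendsto_of_tendsto_of_tendsto_of_le_of_le
            (tendsto_const_nhds (x := (0 : ℝ≥0∞)))
            (?_ : Filter.Tendsto (fun j : ℕ => ENNReal.ofReal (A * (1 / ((j : ℝ) + 1))))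
              Filter.atTop (nhds 0)) (fun j => zero_le) (fun j => ?_)
          · have := ENNReal.tendsto_ofReal h0
            simpa using this
          · exact ENNReal.ofReal_le_ofReal
              (mul_le_mul_of_nonneg_left (hρj j) (by linarith))
        · -- diam bounds
          refine Filter.Eventually.of_forall fun j p => ?_
          rcases p with ⟨i, z⟩
          exact (hPdiam j i z).trans (ENNReal.ofReal_le_ofReal
            (mul_le_mul_of_nonneg_left (hrrρ j i) (by linarith)))
        · -- covering
          refine Filter.Eventually.of_forall fun j => ?_
          rintro w ⟨x, hxK, s, hs, rfl⟩
          obtain ⟨i, hi⟩ := mem_iUnion.mp (htcov j hs)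
          obtain ⟨z, hz, hxQ⟩ := mem_iUnion₂.mp (hQcov j i (hKR hxK))
          refine mem_iUnion.mpr ⟨(i, z), ?_⟩
          rw [hPdef]
          simp only [if_pos hz]
          exact ⟨x, ⟨hxK, hxQ⟩, s, hi, rfl⟩
        · -- liminf bound
          have hdd : ((n : ℝ) + 1) = ((n + 1 : ℕ) : ℝ) := by push_cast; ring
          have hsum : ∀ j, ∑' p : ℕ × (Fin (l + 1) → ℤ),
              EMetric.diam (P j p) ^ ((n : ℝ) + 1) ≤ ENNReal.ofReal q := by
            intro j
            have hinner : ∀ i, ∑' z : Fin (l + 1) → ℤ, EMetric.diam (P j (i, z)) ^ ((n : ℝ) + 1)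
                ≤ ENNReal.ofReal (B * rr j i ^ (n - k)) := by
              intro i
              have hzero : ∀ z ∉ T j i, EMetric.diam (P j (i, z)) ^ ((n : ℝ) + 1) = 0 := by
                intro z hz
                rw [hPdef]
                simp only [if_neg hz]
                rw [EMetric.diam, Metric.ediam_empty, ENNReal.zero_rpow_of_pos (by positivity)]
              rw [tsum_eq_sum (s := T j i) hzero]
              have hterm : ∀ z ∈ T j i, EMetric.diam (P j (i, z)) ^ ((n : ℝ) + 1)
                  ≤ ENNReal.ofReal ((A * rr j i) ^ (n + 1)) := by
                intro z _
                calc EMetric.diam (P j (i, z)) ^ ((n : ℝ) + 1)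
                    ≤ ENNReal.ofReal (A * rr j i) ^ ((n : ℝ) + 1) :=
                      ENNReal.rpow_le_rpow (hPdiam j i z) (by positivity)
                  _ = ENNReal.ofReal (A * rr j i) ^ ((n + 1 : ℕ)) := by
                      rw [hdd, ENNReal.rpow_natCast]
                  _ = ENNReal.ofReal ((A * rr j i) ^ (n + 1)) := by
                      rw [← ENNReal.ofReal_pow (by positivity)]
              calc ∑ z ∈ T j i, EMetric.diam (P j (i, z)) ^ ((n : ℝ) + 1)
                  ≤ ∑ _z ∈ T j i, ENNReal.ofReal ((A * rr j i) ^ (n + 1)) :=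
                    Finset.sum_le_sum hterm
                _ = (T j i).card * ENNReal.ofReal ((A * rr j i) ^ (n + 1)) := by
                    rw [Finset.sum_const, nsmul_eq_mul]
                _ ≤ ENNReal.ofReal ((5 * R / rr j i) ^ (l + 1))
                    * ENNReal.ofReal ((A * rr j i) ^ (n + 1)) := by
                    refine mul_le_mul_left ?_ _
                    rw [← ENNReal.ofReal_natCast ((T j i).card)]
                    exact ENNReal.ofReal_le_ofReal (hQcard j i)
                _ = ENNReal.ofReal ((5 * R / rr j i) ^ (l + 1) * (A * rr j i) ^ (n + 1)) :=
                    (ENNReal.ofReal_mul (by positivity)).symm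
                _ ≤ ENNReal.ofReal (B * rr j i ^ (n - k)) := by
                    refine ENNReal.ofReal_le_ofReal ?_
                    rw [hBdef]
                    exact real_bound hR1 hA1 (hrrpos j i) ((hrrρ j i).trans (hρ1 j)) l n k hlk hkn
            have hsummable : Summable (fun i : ℕ => εr / 2 ^ (i + 1)) :=
              (summable_geometric_two' εr).congr (fun i => by rw [pow_succ]; ring)
            have hps : ∑' p : ℕ × (Fin (l + 1) → ℤ), EMetric.diam (P j p) ^ ((n : ℝ) + 1)
                = ∑' i : ℕ, ∑' z : Fin (l + 1) → ℤ, EMetric.diam (P j (i, z)) ^ ((n : ℝ) + 1) := by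
              refine Eq.trans (tsum_congr (fun p => ?_))
                (ENNReal.tsum_prod
                  (f := fun i z => EMetric.diam (P j (i, z)) ^ ((n : ℝ) + 1)))
              rcases p with ⟨i, z⟩
              rfl
            rw [hps]
            calc ∑' i, ∑' z, EMetric.diam (P j (i, z)) ^ ((n : ℝ) + 1)
                ≤ ∑' i : ℕ, ENNReal.ofReal (B * rr j i ^ (n - k)) := ENNReal.tsum_le_tsum hinner
              _ = ENNReal.ofReal B * ∑' i : ℕ, ENNReal.ofReal (rr j i ^ (n - k)) := by
                  simp_rw [ENNReal.ofReal_mul hB.le]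
                  rw [ENNReal.tsum_mul_left]
              _ ≤ ENNReal.ofReal B *
                  (∑' i : ℕ, (ENNReal.ofReal ((EMetric.diam (t j i)).toReal ^ (n - k))
                    + ENNReal.ofReal (εr / 2 ^ (i + 1)))) := by
                  refine mul_le_mul_right (ENNReal.tsum_le_tsum fun i => ?_) _
                  rw [← ENNReal.ofReal_add (by positivity) (hbase i).le]
                  exact ENNReal.ofReal_le_ofReal (hrrpow j i)
              _ = ENNReal.ofReal B *
                  ((∑' i : ℕ, ENNReal.ofReal ((EMetric.diam (t j i)).toReal ^ (n - k)))
                    + ∑' i : ℕ, ENNReal.ofReal (εr / 2 ^ (i + 1))) := by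
                  rw [ENNReal.tsum_add]
              _ ≤ ENNReal.ofReal B * (ENNReal.ofReal εr + ENNReal.ofReal εr) := by
                  refine mul_le_mul_right (add_le_add ?_ ?_) _
                  · have heq : ∀ i : ℕ, ENNReal.ofReal ((EMetric.diam (t j i)).toReal ^ (n - k))
                        = EMetric.diam (t j i) ^ ((n : ℝ) - k) := by
                      intro i
                      rw [ENNReal.ofReal_pow ENNReal.toReal_nonneg,
                        ENNReal.ofReal_toReal (hdiamfin j i),
                        ← ENNReal.rpow_natCast (EMetric.diam (t j i)) (n - k)]
                      congr 1
                      have : ((n - k : ℕ) : ℝ) = (n : ℝ) - k := by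
                        push_cast [Nat.cast_sub hkn]
                        ring
                      rw [this]
                    simp_rw [heq]
                    exact (htsum j).le
                  · rw [← ENNReal.ofReal_tsum_of_nonneg (fun i => (hbase i).le) hsummable]
                    refine ENNReal.ofReal_le_ofReal (le_of_eq ?_)
                    calc ∑' i : ℕ, εr / 2 ^ (i + 1) = ∑' i : ℕ, εr / 2 / 2 ^ i :=
                        tsum_congr fun i => by rw [pow_succ]; ring
                      _ = εr := tsum_geometric_two' εr
              _ = ENNReal.ofReal q := by
                  rw [← ENNReal.ofReal_add hεr.le hεr.le, ← ENNReal.ofReal_mul hB.le]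
                  congr 1
                  rw [hεrdef]
                  field_simp
                  ring
          calc Filter.liminf (fun j => ∑' p : ℕ × (Fin (l + 1) → ℤ),
                EMetric.diam (P j p) ^ ((n : ℝ) + 1)) Filter.atTop
              ≤ Filter.liminf (fun _ : ℕ => ENNReal.ofReal q) Filter.atTop :=
                Filter.liminf_le_liminf (Filter.Eventually.of_forall hsum)
            _ = ENNReal.ofReal q := Filter.liminf_const _
      have hfr : ((Module.finrank ℝ (EuclideanSpace ℝ (Fin (n + 1))) : ℕ) : ℝ) = (n : ℝ) + 1 := by
        rw [show Module.finrank ℝ (EuclideanSpace ℝ (Fin (n + 1))) = n + 1 from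
          finrank_euclideanSpace_fin]
        push_cast
        ring
      have hac : (volume : Measure (EuclideanSpace ℝ (Fin (n + 1)))) ≪
          μH[(Module.finrank ℝ (EuclideanSpace ℝ (Fin (n + 1))) : ℝ)] :=
        MeasureTheory.Measure.absolutelyContinuous_isAddHaarMeasure _ _
      exact hac (by rw [hfr]; exact hH)
  refine ⟨hvol, ?_⟩
  rw [← interior_eq_empty_iff_dense_compl]
  rcases eq_empty_or_nonempty (interior D) with h | h
  · exact h
  · exact absurd (measure_mono_null interior_subset hvol)
      (isOpen_interior.measure_pos volume h).ne'
end

section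
/- Let n ∈ ℕ and L ∈ (0,1). Let f : 𝔼^{n+1} → ℝ be a positive function satisfying |f(p) − f(q)| ≤ L · ‖p − q‖ for all p, q ∈ 𝔼^{n+1}. Let y ∈ 𝔼^{n+1} and let F ⊆ 𝔼^{n+1} be a finite set such that the open balls {ball(x, f(x))}_{x ∈ F} are pairwise disjoint and each of them has nonempty intersection with ball(y, f(y)). Then the cardinality of F satisfies (card F : ℝ) ≤ ((1+L)(3+L)/(1−L)^2)^{n+1}. -/
open Metric MeasureTheory Set
open scoped ENNReal

/-- Euclidean case of the elementary covering lemma of Appendix B: the number of pairwise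
disjoint balls from the family `{ball x (f x)}`, with `f` an `L`-Lipschitz positive radius
function and `L < 1`, that can intersect a fixed ball `ball y (f y)` is at most
`((1+L)(3+L)/(1-L)²)^{n+1}`. -/
theorem card_disjoint_balls_le
    (n : ℕ) (L : ℝ) (hL0 : 0 < L) (hL1 : L < 1)
    (f : EuclideanSpace ℝ (Fin (n + 1)) → ℝ) (hfpos : ∀ p, 0 < f p)
    (hf : ∀ p q : EuclideanSpace ℝ (Fin (n + 1)), |f p - f q| ≤ L * ‖p - q‖)
    (y : EuclideanSpace ℝ (Fin (n + 1)))
    (F : Finset (EuclideanSpace ℝ (Fin (n + 1))))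
    (hdisj : (F : Set (EuclideanSpace ℝ (Fin (n + 1)))).Pairwise
      fun a b => Disjoint (ball a (f a)) (ball b (f b)))
    (hint : ∀ x ∈ F, (ball x (f x) ∩ ball y (f y)).Nonempty) :
    (F.card : ℝ) ≤ ((1 + L) * (3 + L) / (1 - L) ^ 2) ^ (n + 1) := by
  have hfy := hfpos y
  have h1L : (0:ℝ) < 1 - L := by linarith
  have h1L' : (0:ℝ) < 1 + L := by linarith
  set r : ℝ := (1 - L) / (1 + L) * f y with hrdef
  set R : ℝ := (3 + L) / (1 - L) * f y with hRdef
  have hr0 : 0 < r := mul_pos (div_pos h1L h1L') hfy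
  have hR0 : 0 < R := mul_pos (div_pos (by linarith) h1L) hfy
  have hdxy : ∀ x ∈ F, dist x y < f x + f y := by
    intro x hx
    obtain ⟨z, hz1, hz2⟩ := hint x hx
    rw [mem_ball] at hz1 hz2
    calc dist x y ≤ dist x z + dist z y := dist_triangle _ _ _
    _ < f x + f y := by rw [dist_comm x z]; linarith
  have hlip : ∀ x : EuclideanSpace ℝ (Fin (n+1)), |f x - f y| ≤ L * dist x y := by
    intro x
    have := hf x y
    rwa [← dist_eq_norm] at this
  have hxr : ∀ x ∈ F, r ≤ f x := by
    intro x hx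
    have h1 := (abs_le.mp (hlip x)).1
    have h2 := hdxy x hx
    rw [hrdef, div_mul_eq_mul_div, div_le_iff₀ h1L']
    nlinarith [mul_lt_mul_of_pos_left h2 hL0]
  have hfxle : ∀ x ∈ F, f x * (1 - L) ≤ (1 + L) * f y := by
    intro x hx
    have h1 := (abs_le.mp (hlip x)).2
    have h2 := hdxy x hx
    nlinarith [mul_lt_mul_of_pos_left h2 hL0]
  have hsub : ∀ x ∈ F, ball x (f x) ⊆ ball y R := by
    intro x hx z hz
    rw [mem_ball] at hz ⊢
    have h2 := hdxy x hx
    have h3 := hfxle x hx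
    calc dist z y ≤ dist z x + dist x y := dist_triangle _ _ _
    _ < f x + (f x + f y) := by linarith
    _ ≤ R := by rw [hRdef, div_mul_eq_mul_div, le_div_iff₀ h1L]; nlinarith
  have hdisj' : (F : Set (EuclideanSpace ℝ (Fin (n+1)))).Pairwise
      fun a b => Disjoint (ball a r) (ball b r) := fun a ha b hb hab =>
    (hdisj ha hb hab).mono (ball_subset_ball (hxr a ha)) (ball_subset_ball (hxr b hb))
  have hmeas : ∑ x ∈ F, volume (ball x r) ≤ volume (ball y R) := by
    rw [← measure_biUnion_finset hdisj' fun x _ => measurableSet_ball]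
    exact measure_mono (Set.iUnion₂_subset fun x hx =>
      (ball_subset_ball (hxr x hx)).trans (hsub x hx))
  have hdim : Module.finrank ℝ (EuclideanSpace ℝ (Fin (n+1))) = n + 1 :=
    finrank_euclideanSpace_fin
  have hvol : ∀ (c : EuclideanSpace ℝ (Fin (n+1))) (s : ℝ), 0 ≤ s →
      volume (ball c s) = ENNReal.ofReal (s ^ (n+1)) *
        volume (ball (0 : EuclideanSpace ℝ (Fin (n+1))) 1) := by
    intro c s hs
    rw [Measure.addHaar_ball volume c hs, hdim]
  set V := volume (ball (0 : EuclideanSpace ℝ (Fin (n+1))) 1) with hV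
  have hV0 : V ≠ 0 := (measure_ball_pos volume _ one_pos).ne'
  have hVtop : V ≠ ⊤ := measure_ball_lt_top.ne
  have key : (F.card : ℝ≥0∞) * ENNReal.ofReal (r ^ (n+1)) ≤ ENNReal.ofReal (R ^ (n+1)) := by
    have h1 : (F.card : ℝ≥0∞) * ENNReal.ofReal (r ^ (n+1)) * V ≤
        ENNReal.ofReal (R ^ (n+1)) * V := by
      calc (F.card : ℝ≥0∞) * ENNReal.ofReal (r ^ (n+1)) * V
          = ∑ x ∈ F, volume (ball x r) := by
            rw [Finset.sum_congr rfl fun x _ => hvol x r hr0.le, Finset.sum_const,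
              nsmul_eq_mul, mul_assoc]
        _ ≤ volume (ball y R) := hmeas
        _ = ENNReal.ofReal (R ^ (n+1)) * V := hvol y R hR0.le
    exact (ENNReal.mul_le_mul_iff_left hV0 hVtop).mp h1
  have hreal : (F.card : ℝ) * r ^ (n+1) ≤ R ^ (n+1) := by
    rw [← ENNReal.ofReal_natCast, ← ENNReal.ofReal_mul (by positivity)] at key
    exact (ENNReal.ofReal_le_ofReal_iff (by positivity)).mp key
  have hRr : R = ((1 + L) * (3 + L) / (1 - L) ^ 2) * r := by
    rw [hrdef, hRdef]; field_simp
  refine le_of_mul_le_mul_right ?_ (pow_pos hr0 (n+1))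
  calc (F.card : ℝ) * r ^ (n+1) ≤ R ^ (n+1) := hreal
  _ = ((1 + L) * (3 + L) / (1 - L) ^ 2) ^ (n + 1) * r ^ (n+1) := by rw [hRr, mul_pow]
end

section
/- Let n ∈ ℕ, let I be a nonnegative integer, and let s : 𝔼^{n+1} → ℝ be a function with the following property: for every ρ > 0 and every finite set F ⊆ 𝔼^{n+1} such that s(x) < ρ for all x ∈ F and the open balls {ball(x, ρ)}_{x ∈ F} are pairwise disjoint, one has card F ≤ I. Then for every r ∈ (0, 1/2], volume( thickening r {x | 0 < s(x) ∧ s(x) < r} ∩ ball(0, 1/2) ) ≤ I · volume(ball(0, 3r)). -/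
open Metric MeasureTheory Set
open scoped ENNReal

/-- Euclidean core of the 'low stability bound' lemma: if at most `I` pairwise disjoint
balls of any common radius `ρ` can be centered at points where `s < ρ`, then the volume of
the `r`-neighborhood of `{0 < s < r}` inside `ball 0 (1/2)` is at most
`I · volume (ball 0 (3r))`. -/
theorem low_stability_bound
    (n I : ℕ)
    (s : EuclideanSpace ℝ (Fin (n + 1)) → ℝ)
    (hcount : ∀ ρ : ℝ, 0 < ρ → ∀ F : Finset (EuclideanSpace ℝ (Fin (n + 1))),
      (∀ x ∈ F, s x < ρ) →
      ((F : Set (EuclideanSpace ℝ (Fin (n + 1)))).Pairwise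
        fun a b => Disjoint (ball a ρ) (ball b ρ)) →
      F.card ≤ I)
    (r : ℝ) (hr0 : 0 < r) (hr : r ≤ 1 / 2) :
    volume (thickening r {x | 0 < s x ∧ s x < r} ∩ ball (0 : EuclideanSpace ℝ (Fin (n + 1))) (1 / 2))
      ≤ (I : ℝ≥0∞) * volume (ball (0 : EuclideanSpace ℝ (Fin (n + 1))) (3 * r)) := by
  classical
  let E := EuclideanSpace ℝ (Fin (n + 1))
  set A : Set (EuclideanSpace ℝ (Fin (n + 1))) := {x | 0 < s x ∧ s x < r} with hA
  set P : ℕ → Prop := fun k => ∃ F : Finset (EuclideanSpace ℝ (Fin (n + 1))), (↑F ⊆ A) ∧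
    ((F : Set (EuclideanSpace ℝ (Fin (n + 1)))).Pairwise fun a b => Disjoint (ball a r) (ball b r)) ∧ F.card = k with hP
  have hP0 : P 0 := ⟨∅, by simp, by simp, rfl⟩
  have hPle : ∀ k, P k → k ≤ I := by
    rintro k ⟨F, hFA, hFd, rfl⟩
    exact hcount r hr0 F (fun x hx => (hFA hx).2) hFd
  obtain ⟨F, hFA, hFd, hFcard⟩ := Nat.findGreatest_spec (P := P) (Nat.zero_le I) hP0
  set k := Nat.findGreatest P I with hk
  have hmax : ∀ a ∈ A, ∃ f ∈ F, ¬ Disjoint (ball a r) (ball f r) := by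
    intro a ha
    by_contra h
    push_neg at h
    have haF : a ∉ F := by
      intro haF
      exact (Set.not_disjoint_iff.mpr ⟨a, mem_ball_self hr0, mem_ball_self hr0⟩) (h a haF)
    have hPk1 : P (k + 1) := by
      refine ⟨insert a F, ?_, ?_, ?_⟩
      · rw [Finset.coe_insert]
        exact Set.insert_subset ha hFA
      · rw [Finset.coe_insert]
        refine @Set.Pairwise.insert_of_symm _ _ _ _ ⟨?_⟩ hFd ?_
        · intro x y hxy
          exact hxy.symm
        · intro b hb _
          exact h b hb
      · rw [Finset.card_insert_of_notMem haF, hFcard]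
    have := Nat.le_findGreatest (hPle _ hPk1) hPk1
    omega
  have hsub : thickening r A ⊆ ⋃ f ∈ F, ball f (3 * r) := by
    intro x hx
    obtain ⟨a, haA, hxa⟩ := (mem_thickening_iff).mp hx
    obtain ⟨f, hfF, hnd⟩ := hmax a haA
    obtain ⟨z, hz1, hz2⟩ := Set.not_disjoint_iff.mp hnd
    have hdist : dist x f < 3 * r := by
      calc dist x f ≤ dist x a + dist a z + dist z f := dist_triangle4 x a z f
        _ < r + r + r := by
            rw [mem_ball] at hz1 hz2
            rw [dist_comm a z]
            linarith
        _ = 3 * r := by ring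
    exact Set.mem_iUnion₂.mpr ⟨f, hfF, mem_ball.mpr hdist⟩
  calc volume (thickening r A ∩ ball (0 : EuclideanSpace ℝ (Fin (n + 1))) (1 / 2))
      ≤ volume (⋃ f ∈ F, ball f (3 * r)) :=
        measure_mono (Set.inter_subset_left.trans hsub)
    _ ≤ ∑ f ∈ F, volume (ball f (3 * r)) := measure_biUnion_finset_le F _
    _ = (F.card : ℝ≥0∞) * volume (ball (0 : EuclideanSpace ℝ (Fin (n + 1))) (3 * r)) := by
        rw [Finset.sum_congr rfl fun f _ => Measure.addHaar_ball_center volume f (3 * r)]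
        simp [Finset.sum_const, mul_comm]
    _ ≤ (I : ℝ≥0∞) * volume (ball (0 : EuclideanSpace ℝ (Fin (n + 1))) (3 * r)) := by
        gcongr
        exact_mod_cast hFcard ▸ hPle k ⟨F, hFA, hFd, hFcard⟩
end

section
/- Let n ∈ ℕ, let I ≥ 1 be an integer, and let s : 𝔼^{n+1} → ℝ be a function with the following property: for every ρ > 0 and every finite set F ⊆ 𝔼^{n+1} such that s(x) < ρ for all x ∈ F and the open balls {ball(x, ρ)}_{x ∈ F} are pairwise disjoint, one has card F ≤ I. Let 0 < a ≤ b, let γ ∈ (0,1), and let A ⊆ ball(0,1) be a subset with a ≤ s(x) ≤ b for all x ∈ A. Then there exists a finite set B ⊆ A such that A ⊆ ⋃_{y ∈ B} ball(y, γ · s(y)) and (card B : ℝ) ≤ I · (9 · (b/a) · (1 + γ⁻¹))^{n+1}. -/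
open Metric MeasureTheory Set ENNReal

variable {d : ℕ}

local notation "𝔼" => EuclideanSpace ℝ (Fin d)

/-- Packing bound: a `2r`-separated finite set in `closedBall c R` has at most
`((R+r)/r)^d` points. -/
lemma packing_bound (c : 𝔼) (r R : ℝ) (hr : 0 < r) (hR : 0 ≤ R)
    (F : Finset 𝔼) (hF : ∀ x ∈ F, dist x c ≤ R)
    (hsep : (F : Set 𝔼).Pairwise fun p q => 2 * r ≤ dist p q) :
    (F.card : ℝ) ≤ ((R + r) / r) ^ d := by
  have hdisj : (F : Set 𝔼).PairwiseDisjoint fun y => ball y r := by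
    intro p hp q hq hpq
    exact ball_disjoint_ball (by linarith [hsep hp hq hpq])
  have hsub : (⋃ y ∈ F, ball y r) ⊆ ball c (R + r) := by
    intro z hz
    simp only [mem_iUnion] at hz
    obtain ⟨y, hy, hzy⟩ := hz
    have := hF y hy
    simp only [mem_ball] at hzy ⊢
    calc dist z c ≤ dist z y + dist y c := dist_triangle _ _ _
    _ < R + r := by linarith
  have hmeas : volume (⋃ y ∈ F, ball y r) = ∑ y ∈ F, volume (ball y r) :=
    measure_biUnion_finset hdisj fun y _ => measurableSet_ball
  have hvol : ∀ y : 𝔼, volume (ball y r) = ENNReal.ofReal (r ^ d) * volume (ball (0 : 𝔼) 1) := by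
    intro y
    rw [Measure.addHaar_ball_of_pos _ _ hr, finrank_euclideanSpace_fin]
  have key : (F.card : ℝ≥0∞) * ENNReal.ofReal (r ^ d) * volume (ball (0 : 𝔼) 1) ≤
      ENNReal.ofReal ((R + r) ^ d) * volume (ball (0 : 𝔼) 1) := by
    calc (F.card : ℝ≥0∞) * ENNReal.ofReal (r ^ d) * volume (ball (0 : 𝔼) 1)
        = ∑ y ∈ F, volume (ball y r) := by
          rw [Finset.sum_congr rfl fun y _ => hvol y, Finset.sum_const, nsmul_eq_mul, mul_assoc]
      _ = volume (⋃ y ∈ F, ball y r) := hmeas.symm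
      _ ≤ volume (ball c (R + r)) := measure_mono hsub
      _ = ENNReal.ofReal ((R + r) ^ d) * volume (ball (0 : 𝔼) 1) := by
          rw [Measure.addHaar_ball_of_pos _ _ (by linarith : (0:ℝ) < R + r),
            finrank_euclideanSpace_fin]
  have hV0 : volume (ball (0 : 𝔼) 1) ≠ 0 := (measure_ball_pos _ _ one_pos).ne'
  have hVtop : volume (ball (0 : 𝔼) 1) ≠ ⊤ := measure_ball_lt_top.ne
  have key2 : (F.card : ℝ≥0∞) * ENNReal.ofReal (r ^ d) ≤ ENNReal.ofReal ((R + r) ^ d) :=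
    (ENNReal.mul_le_mul_iff_left hV0 hVtop).mp key
  have hrd : (0:ℝ) ≤ r ^ d := (pow_pos hr d).le
  have key3 : ENNReal.ofReal ((F.card : ℝ) * r ^ d) ≤ ENNReal.ofReal ((R + r) ^ d) := by
    rw [ENNReal.ofReal_mul (by positivity), ENNReal.ofReal_natCast]
    exact key2
  have key4 : (F.card : ℝ) * r ^ d ≤ (R + r) ^ d :=
    (ENNReal.ofReal_le_ofReal_iff (by positivity)).mp key3
  rw [div_pow, le_div_iff₀ (by positivity)]
  exact key4

/-- Greedy extraction: from an `r`-separated finite set one can extract an `R`-separated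
subset losing at most a factor `K`, where `K` bounds the number of `r`-separated points
within distance `R` of any given point. -/
lemma greedy_extract {E : Type*} [MetricSpace E] (r R K : ℝ) (hR : 0 ≤ R)
    (hbound : ∀ (x : E) (N : Finset E), (∀ y ∈ N, dist y x ≤ R) →
      ((N : Set E).Pairwise fun p q => r ≤ dist p q) → (N.card : ℝ) ≤ K) :
    ∀ F : Finset E, ((F : Set E).Pairwise fun p q => r ≤ dist p q) →
      ∃ G : Finset E, G ⊆ F ∧ ((G : Set E).Pairwise fun p q => R < dist p q) ∧
        (F.card : ℝ) ≤ K * G.card := by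
  intro F
  induction F using Finset.strongInduction with
  | _ F IH =>
    intro hF
    rcases F.eq_empty_or_nonempty with rfl | ⟨x, hx⟩
    · exact ⟨∅, Finset.Subset.refl _, by simp, by simp⟩
    · classical
      set N : Finset E := F.filter (fun y => dist y x ≤ R) with hN
      set F' : Finset E := F \ N with hF'
      have hxN : x ∈ N := by simp [hN, hx, dist_self, hR]
      have hF'ss : F' ⊂ F := by
        refine Finset.sdiff_ssubset ?_ ⟨x, hxN⟩
        exact Finset.filter_subset _ _
      have hF'sep : ((F' : Set E)).Pairwise fun p q => r ≤ dist p q :=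
        hF.mono (by simp [hF', Finset.coe_sdiff])
      obtain ⟨G', hG'F', hG'sep, hG'card⟩ := IH F' hF'ss hF'sep
      have hxF' : x ∉ F' := by simp [hF', hxN]
      have hxG' : x ∉ G' := fun h => hxF' (hG'F' h)
      refine ⟨insert x G', ?_, ?_, ?_⟩
      · intro y hy
        rcases Finset.mem_insert.mp hy with rfl | hy
        · exact hx
        · exact (Finset.sdiff_subset) (hG'F' hy)
      · rw [Finset.coe_insert]
        have hfar : ∀ y ∈ G', R < dist x y := by
          intro y hy
          have hyF' : y ∈ F' := hG'F' hy
          have : ¬ (dist y x ≤ R) := by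
            intro h
            have : y ∈ N := Finset.mem_filter.mpr ⟨(Finset.sdiff_subset) hyF', h⟩
            simp [hF', this] at hyF'
          rw [dist_comm]; linarith [not_le.mp this]
        intro p hp q hq hpq
        rcases hp with rfl | hp
        · rcases hq with rfl | hq
          · exact absurd rfl hpq
          · exact hfar q hq
        · rcases hq with rfl | hq
          · rw [dist_comm]; exact hfar p hp
          · exact hG'sep hp hq hpq
      · have hKN : (N.card : ℝ) ≤ K := by
          refine hbound x N (fun y hy => (Finset.mem_filter.mp hy).2) ?_
          refine hF.mono ?_
          intro y hy
          simp only [hN, Finset.coe_filter, Set.mem_setOf_eq, Finset.mem_coe] at hy ⊢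
          exact hy.1
        have hsplit : F'.card + N.card = F.card :=
          Finset.card_sdiff_add_card_eq_card (Finset.filter_subset _ _)
        have hcard : (insert x G').card = G'.card + 1 := Finset.card_insert_of_notMem hxG'
        rw [hcard]
        calc (F.card : ℝ) = (F'.card : ℝ) + N.card := by exact_mod_cast hsplit.symm
          _ ≤ K * G'.card + K := add_le_add hG'card hKN
          _ = K * ((G'.card : ℕ) + 1 : ℕ) := by push_cast; ring

/-- Euclidean core of the covering lemma: if at most `I` pairwise disjoint balls of any
common radius `ρ` can be centered at points where `s < ρ`, then any subset `A` of the unit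
ball on which `s` takes values in `[a, b]` can be covered by at most
`I · (9 (b/a) (1 + γ⁻¹))^{n+1}` balls `ball y (γ s y)` with centers `y ∈ A`. -/
theorem covering_lemma
    (n I : ℕ) (hI : 1 ≤ I)
    (s : EuclideanSpace ℝ (Fin (n + 1)) → ℝ)
    (hcount : ∀ ρ : ℝ, 0 < ρ → ∀ F : Finset (EuclideanSpace ℝ (Fin (n + 1))),
      (∀ x ∈ F, s x < ρ) →
      ((F : Set (EuclideanSpace ℝ (Fin (n + 1)))).Pairwise
        fun a b => Disjoint (ball a ρ) (ball b ρ)) →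
      F.card ≤ I)
    (a b : ℝ) (ha : 0 < a) (hab : a ≤ b)
    (γ : ℝ) (hγ0 : 0 < γ) (hγ1 : γ < 1)
    (A : Set (EuclideanSpace ℝ (Fin (n + 1)))) (hA : A ⊆ ball 0 1)
    (hAs : ∀ x ∈ A, a ≤ s x ∧ s x ≤ b) :
    ∃ B : Finset (EuclideanSpace ℝ (Fin (n + 1))),
      (B : Set (EuclideanSpace ℝ (Fin (n + 1)))) ⊆ A ∧
      A ⊆ ⋃ y ∈ B, ball y (γ * s y) ∧
      (B.card : ℝ) ≤ (I : ℝ) * (9 * (b / a) * (1 + γ⁻¹)) ^ (n + 1) := by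
  classical
  have hb : 0 < b := lt_of_lt_of_le ha hab
  have hga : 0 < γ * a := mul_pos hγ0 ha
  -- Zorn to get a maximal (γ a)-separated subset of A
  have hzorn : ∀ c ⊆ {T : Set (EuclideanSpace ℝ (Fin (n + 1))) |
        T ⊆ A ∧ T.Pairwise fun p q => γ * a ≤ dist p q}, IsChain (· ⊆ ·) c →
      ∃ ub ∈ {T : Set (EuclideanSpace ℝ (Fin (n + 1))) |
        T ⊆ A ∧ T.Pairwise fun p q => γ * a ≤ dist p q}, ∀ t ∈ c, t ⊆ ub := by
    intro c hc hchain
    refine ⟨⋃₀ c, ⟨?_, ?_⟩, fun t ht => subset_sUnion_of_mem ht⟩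
    · exact sUnion_subset fun t ht => (hc ht).1
    · intro p hp q hq hpq
      obtain ⟨tp, htp, hptp⟩ := hp
      obtain ⟨tq, htq, hqtq⟩ := hq
      rcases hchain.total htp htq with h | h
      · exact (hc htq).2 (h hptp) hqtq hpq
      · exact (hc htp).2 hptp (h hqtq) hpq
  obtain ⟨T, hTmax⟩ := zorn_subset _ hzorn
  obtain ⟨hTA, hTsep⟩ := hTmax.prop
  -- T is finite by the packing bound inside the unit ball
  have hTfin : T.Finite := by
    by_contra hinf
    obtain ⟨m, hm⟩ := exists_nat_gt (((1 + γ * a / 2) / (γ * a / 2)) ^ (n + 1))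
    obtain ⟨t, htT, htcard⟩ := (Set.Infinite.exists_subset_card_eq hinf m)
    have hbd : ((t.card : ℝ)) ≤ ((1 + γ * a / 2) / (γ * a / 2)) ^ (n + 1) := by
      refine packing_bound 0 (γ * a / 2) 1 (by positivity) zero_le_one t ?_ ?_
      · intro x hx
        have := hA (hTA (htT hx))
        simpa [dist_eq_norm] using le_of_lt (mem_ball_zero_iff.mp this)
      · intro p hp q hq hpq
        have := hTsep (htT hp) (htT hq) hpq
        linarith
    rw [htcard] at hbd
    exact absurd hbd (not_le.mpr hm)
  set B : Finset (EuclideanSpace ℝ (Fin (n + 1))) := hTfin.toFinset with hB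
  have hBcoe : (B : Set (EuclideanSpace ℝ (Fin (n + 1)))) = T := hTfin.coe_toFinset
  -- maximality: every point of A is within γ a of some point of T
  have hnear : ∀ x ∈ A, ∃ y ∈ T, dist x y < γ * a := by
    intro x hxA
    by_contra hcon
    push_neg at hcon
    have hmem : insert x T ∈
        {T : Set (EuclideanSpace ℝ (Fin (n + 1))) |
          T ⊆ A ∧ T.Pairwise fun p q => γ * a ≤ dist p q} := by
      constructor
      · exact insert_subset hxA hTA
      · refine (Set.pairwise_insert).mpr ⟨hTsep, fun y hy _ => ⟨hcon y hy, by rw [dist_comm]; exact hcon y hy⟩⟩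
    have : insert x T ⊆ T := hTmax.2 hmem (subset_insert x T)
    have hxT : x ∈ T := this (mem_insert x T)
    have := hcon x hxT
    simp at this
    linarith
  refine ⟨B, ?_, ?_, ?_⟩
  · rw [hBcoe]; exact hTA
  · intro x hxA
    obtain ⟨y, hyT, hxy⟩ := hnear x hxA
    have hya : a ≤ s y := (hAs y (hTA hyT)).1
    refine mem_iUnion₂.mpr ⟨y, ?_, ?_⟩
    · exact hTfin.mem_toFinset.mpr hyT
    · refine mem_ball.mpr (lt_of_lt_of_le hxy ?_)
      exact mul_le_mul_of_nonneg_left hya hγ0.le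
  -- cardinality bound
  · have hbase0 : (0:ℝ) ≤ (4 * b + γ * a / 2) / (γ * a / 2) := by positivity
    obtain ⟨G, hGB, hGsep, hGcard⟩ := greedy_extract (γ * a) (4 * b)
        (((4 * b + γ * a / 2) / (γ * a / 2)) ^ (n + 1)) (by positivity)
        (fun x N hNd hNs => packing_bound x (γ * a / 2) (4 * b) (by positivity)
          (by positivity) N hNd
          (fun p hp q hq hpq => by have := hNs hp hq hpq; linarith))
        B (by rw [hBcoe]; exact hTsep)
    have hGI : G.card ≤ I := by
      refine hcount (2 * b) (by linarith) G ?_ ?_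
      · intro x hx
        have hxA : x ∈ A := hTA (hBcoe ▸ Finset.coe_subset.mpr hGB (Finset.mem_coe.mpr hx))
        have := (hAs x hxA).2
        linarith
      · intro p hp q hq hpq
        refine ball_disjoint_ball ?_
        have := hGsep hp hq hpq
        linarith
    have hgab : γ * a ≤ b := by nlinarith
    have hbase : (4 * b + γ * a / 2) / (γ * a / 2) ≤ 9 * (b / a) * (1 + γ⁻¹) := by
      rw [div_le_iff₀ (by positivity)]
      have h1 : 9 * (b / a) * (1 + γ⁻¹) * (γ * a / 2) = (9 * b * γ + 9 * b) / 2 := by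
        field_simp
      rw [h1]
      have h9 : (0:ℝ) ≤ 9 * b * γ := by positivity
      linarith
    have hKM : ((4 * b + γ * a / 2) / (γ * a / 2)) ^ (n + 1) ≤
        (9 * (b / a) * (1 + γ⁻¹)) ^ (n + 1) := pow_le_pow_left₀ hbase0 hbase _
    calc (B.card : ℝ)
        ≤ ((4 * b + γ * a / 2) / (γ * a / 2)) ^ (n + 1) * G.card := hGcard
      _ ≤ ((4 * b + γ * a / 2) / (γ * a / 2)) ^ (n + 1) * I := by
          refine mul_le_mul_of_nonneg_left ?_ (by positivity)
          exact_mod_cast hGI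
      _ ≤ (9 * (b / a) * (1 + γ⁻¹)) ^ (n + 1) * I :=
          mul_le_mul_of_nonneg_right hKM (by positivity)
      _ = (I : ℝ) * (9 * (b / a) * (1 + γ⁻¹)) ^ (n + 1) := by ring
end
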